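/- arXiv:1304.7068 — 9 statements merged into one kernel-verified Lean document; each statement's English description precedes it below -/
import Mathlib

section
/- Let X be a Banach space such that for every x in the unit sphere S_X and every ε > 0, x belongs to the closed convex hull of Δ_ε(x) = {y ∈ B_X : ‖y − x‖ ≥ 2 − ε}. Then X has the local diameter 2 property, i.e., every slice of B_X has diameter 2. -/
open Metric Set
open scoped ENNReal

/-- A subset of a normed space is *weakly open* if it is open in the weak topology. -/
def IsWeaklyOpen {X : Type*} [NormedAddCommGroup X] [NormedSpace ℝ X] (W : Set X) : Prop :=
  IsOpen ((toWeakSpace ℝ X).symm ⁻¹' W)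

/-- The slice of the closed unit ball determined by a functional `f` and `ε > 0`. -/
def Slice {X : Type*} [NormedAddCommGroup X] [NormedSpace ℝ X]
    (f : X →L[ℝ] ℝ) (ε : ℝ) : Set X :=
  {x | ‖x‖ ≤ 1 ∧ 1 - ε < f x}

/-- A finite convex combination of slices of the unit ball. -/
def CombSlices {X : Type*} [NormedAddCommGroup X] [NormedSpace ℝ X] {n : ℕ}
    (lam : Fin n → ℝ) (f : Fin n → X →L[ℝ] ℝ) (ε : Fin n → ℝ) : Set X :=
  {x | ∃ g : Fin n → X, (∀ i, g i ∈ Slice (f i) (ε i)) ∧ x = ∑ i, lam i • g i}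

/-- The strong diameter 2 property. -/
def StrongD2P (X : Type*) [NormedAddCommGroup X] [NormedSpace ℝ X] : Prop :=
  ∀ (n : ℕ) (lam : Fin n → ℝ) (f : Fin n → X →L[ℝ] ℝ) (ε : Fin n → ℝ),
    (∀ i, 0 ≤ lam i) → ∑ i, lam i = 1 → (∀ i, ‖f i‖ = 1) → (∀ i, 0 < ε i) →
    Metric.diam (CombSlices lam f ε) = 2

/-- The diameter 2 property. -/
def D2P (X : Type*) [NormedAddCommGroup X] [NormedSpace ℝ X] : Prop :=
  ∀ W : Set X, IsWeaklyOpen W → (closedBall (0:X) 1 ∩ W).Nonempty →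
    Metric.diam (closedBall (0:X) 1 ∩ W) = 2

/-- The local diameter 2 property. -/
def LocalD2P (X : Type*) [NormedAddCommGroup X] [NormedSpace ℝ X] : Prop :=
  ∀ (f : X →L[ℝ] ℝ) (ε : ℝ), ‖f‖ = 1 → 0 < ε → Metric.diam (Slice f ε) = 2


/-- If every point `x` of the unit sphere lies in the closed convex hull of
`Δ_ε(x) = {y ∈ B_X : ‖y − x‖ ≥ 2 − ε}` for every `ε > 0`, then `X` has the
local diameter 2 property. -/
theorem stmt_2 (X : Type*) [NormedAddCommGroup X] [NormedSpace ℝ X] [CompleteSpace X]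
    (h : ∀ x : X, ‖x‖ = 1 → ∀ ε : ℝ, 0 < ε →
      x ∈ closure (convexHull ℝ {y : X | ‖y‖ ≤ 1 ∧ 2 - ε ≤ ‖y - x‖})) :
    LocalD2P X := by
  intro f ε hf hε
  have hsub : ∀ e : ℝ, Slice f e ⊆ closedBall (0:X) 1 := by
    intro e y hy
    simpa [mem_closedBall, dist_zero_right] using hy.1
  have hbdd : ∀ e : ℝ, Bornology.IsBounded (Slice f e) :=
    fun e => (isBounded_closedBall).subset (hsub e)
  have hupper : Metric.diam (Slice f ε) ≤ 2 := by
    calc Metric.diam (Slice f ε) ≤ Metric.diam (closedBall (0:X) 1) :=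
        Metric.diam_mono (hsub ε) isBounded_closedBall
      _ ≤ 2 * 1 := Metric.diam_closedBall (by norm_num)
      _ = 2 := by norm_num
  set ε' := min ε 1 with hε'def
  have hε'pos : 0 < ε' := lt_min hε one_pos
  have hε'le1 : ε' ≤ 1 := min_le_right _ _
  have hε'le : ε' ≤ ε := min_le_left _ _
  have hslice : Slice f ε' ⊆ Slice f ε := by
    intro y hy
    exact ⟨hy.1, lt_of_le_of_lt (by linarith) hy.2⟩
  -- find a norm-one point x with f x > 1 - ε'/2
  obtain ⟨x₀, hx₀, hfx₀⟩ := f.exists_lt_apply_of_lt_opNorm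
    (r := 1 - ε'/2) (by rw [hf]; linarith)
  obtain ⟨x₁, hx₁, hfx₁⟩ : ∃ x₁ : X, ‖x₁‖ ≤ 1 ∧ 1 - ε'/2 < f x₁ := by
    rcases le_or_gt 0 (f x₀) with h0 | h0
    · exact ⟨x₀, hx₀.le, by rwa [Real.norm_eq_abs, abs_of_nonneg h0] at hfx₀⟩
    · refine ⟨-x₀, by simpa using hx₀.le, ?_⟩
      rw [map_neg]
      rwa [Real.norm_eq_abs, abs_of_neg h0] at hfx₀
  have hfx₁pos : 0 < f x₁ := by linarith
  have hx₁ne : x₁ ≠ 0 := by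
    intro h0; rw [h0, map_zero] at hfx₁pos; exact lt_irrefl _ hfx₁pos
  have hnx₁pos : 0 < ‖x₁‖ := norm_pos_iff.mpr hx₁ne
  set x : X := ‖x₁‖⁻¹ • x₁ with hxdef
  have hxnorm : ‖x‖ = 1 := by
    rw [hxdef, norm_smul, norm_inv, norm_norm, inv_mul_cancel₀ (ne_of_gt hnx₁pos)]
  have hfx : 1 - ε'/2 < f x := by
    have : f x = ‖x₁‖⁻¹ * f x₁ := by rw [hxdef, map_smul, smul_eq_mul]
    rw [this]
    have h1 : f x₁ ≤ ‖x₁‖⁻¹ * f x₁ := by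
      have : 1 ≤ ‖x₁‖⁻¹ := (one_le_inv₀ hnx₁pos).mpr hx₁
      nlinarith
    linarith
  have hxmem : x ∈ Slice f ε' := ⟨le_of_eq hxnorm, by linarith⟩
  -- lower bound
  have hlower : (2:ℝ) ≤ Metric.diam (Slice f ε') := by
    refine le_of_forall_pos_le_add ?_
    intro δ hδ
    -- find v ∈ Slice f ε' with ‖v - x‖ ≥ 2 - δ
    have hclos := h x hxnorm δ hδ
    rw [Metric.mem_closure_iff] at hclos
    obtain ⟨w, hw, hwx⟩ := hclos (ε'/4) (by linarith)
    rw [convexHull_eq] at hw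
    obtain ⟨ι, t, wt, z, hwt0, hwt1, hz, hcm⟩ := hw
    have hfw : 1 - 3*ε'/4 < f w := by
      have : |f x - f w| ≤ ‖x - w‖ := by
        calc |f x - f w| = |f (x - w)| := by rw [map_sub]
          _ = ‖f (x - w)‖ := (Real.norm_eq_abs _).symm
          _ ≤ ‖f‖ * ‖x - w‖ := f.le_opNorm _
          _ = ‖x - w‖ := by rw [hf, one_mul]
      have hdx : ‖x - w‖ < ε'/4 := by rwa [dist_eq_norm] at hwx
      have h2 : f x - f w ≤ |f x - f w| := le_abs_self _
      linarith
    -- some z i has f (z i) > 1 - ε'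
    have hwsum : w = ∑ i ∈ t, wt i • z i := by
      rw [← hcm, Finset.centerMass_eq_of_sum_1 _ _ hwt1]
    by_cases hex : ∃ i ∈ t, 1 - ε' < f (z i)
    · obtain ⟨i, hit, hfi⟩ := hex
      have hzi : z i ∈ Slice f ε' := ⟨(hz i hit).1, hfi⟩
      have hdist : 2 - δ ≤ dist x (z i) := by
        rw [dist_eq_norm, ← norm_neg]
        simpa [neg_sub] using (hz i hit).2
      calc (2:ℝ) ≤ dist x (z i) + δ := by linarith
        _ ≤ Metric.diam (Slice f ε') + δ := by
            have := Metric.dist_le_diam_of_mem (hbdd ε') hxmem hzi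
            linarith
    · push_neg at hex
      exfalso
      have : f w ≤ 1 - ε' := by
        rw [hwsum, map_sum]
        calc ∑ i ∈ t, f (wt i • z i) = ∑ i ∈ t, wt i * f (z i) := by
              simp [map_smul, smul_eq_mul]
          _ ≤ ∑ i ∈ t, wt i * (1 - ε') :=
              Finset.sum_le_sum fun i hi =>
                mul_le_mul_of_nonneg_left (hex i hi) (hwt0 i hi)
          _ = 1 - ε' := by rw [← Finset.sum_mul, hwt1, one_mul]
      linarith
  have hmono : Metric.diam (Slice f ε') ≤ Metric.diam (Slice f ε) :=
    Metric.diam_mono hslice (hbdd ε)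
  linarith
end

section
/- If X₁ and X₂ are infinite-dimensional Banach spaces each having the diameter 2 property (every nonempty relatively weakly open subset of the unit ball has diameter 2), then for every 1 ≤ p < ∞, the ℓp-sum X₁ ⊕_p X₂ has the diameter 2 property. -/
open Metric Set
open scoped ENNReal

/-! ### Auxiliary lemmas -/

section Aux

variable {X : Type*} [NormedAddCommGroup X] [NormedSpace ℝ X]

/-- A finite intersection of open slabs determined by functionals is weakly open. -/
lemma weaklyOpen_slab {ι : Type*} [Finite ι] (f : ι → X →L[ℝ] ℝ) (c : ι → ℝ) (δ : ℝ) :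
    IsWeaklyOpen {x : X | ∀ i, |f i x - c i| < δ} := by
  have h : ((toWeakSpace ℝ X).symm ⁻¹' {x : X | ∀ i, |f i x - c i| < δ})
      = ⋂ i, (fun x : WeakSpace ℝ X => f i ((toWeakSpace ℝ X).symm x)) ⁻¹'
          (Metric.ball (c i) δ) := by
    ext x
    simp [Real.dist_eq]
  rw [IsWeaklyOpen, h]
  exact isOpen_iInter_of_finite fun i =>
    (Metric.isOpen_ball).preimage (WeakBilin.eval_continuous _ (f i))

/-- In an infinite-dimensional space, finitely many functionals have a common unit-norm
zero. -/
lemma exists_unit_ker (hinf : ¬ FiniteDimensional ℝ X) {ι : Type*} [Finite ι]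
    (f : ι → X →L[ℝ] ℝ) : ∃ w : X, ‖w‖ = 1 ∧ ∀ i, f i w = 0 := by
  cases nonempty_fintype ι
  set T : X →ₗ[ℝ] (ι → ℝ) := LinearMap.pi fun i => (f i : X →ₗ[ℝ] ℝ) with hT
  have hker : LinearMap.ker T ≠ ⊥ := by
    intro hk
    exact hinf (FiniteDimensional.of_injective T (LinearMap.ker_eq_bot.mp hk))
  obtain ⟨w₀, hw₀mem, hw₀ne⟩ := Submodule.exists_mem_ne_zero_of_ne_bot hker
  refine ⟨‖w₀‖⁻¹ • w₀, norm_smul_inv_norm hw₀ne, fun i => ?_⟩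
  have h0 : f i w₀ = 0 := congrFun (LinearMap.mem_ker.mp hw₀mem) i
  simp [h0]

/-- Every point of a weakly open set has a basic weak neighborhood inside it. -/
lemma exists_basic_nhd {W : Set X} (hW : IsWeaklyOpen W) {x : X} (hx : x ∈ W) :
    ∃ (I : Finset (X →L[ℝ] ℝ)) (δ : ℝ), 0 < δ ∧
      ∀ y, (∀ f ∈ I, |f y - f x| < δ) → y ∈ W := by
  rw [IsWeaklyOpen] at hW
  replace hW := isOpen_induced_iff.mp hW
  obtain ⟨V, hVopen, hVeq⟩ := hW
  have hxV : (fun f : X →L[ℝ] ℝ => f x) ∈ V := by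
    have : toWeakSpace ℝ X x ∈ (toWeakSpace ℝ X).symm ⁻¹' W := by
      simpa using hx
    rw [← hVeq] at this
    exact this
  obtain ⟨I, u, hu, hsub⟩ := isOpen_pi_iff.mp hVopen _ hxV
  have hsmall : ∀ f : X →L[ℝ] ℝ, ∃ d : ℝ, 0 < d ∧ (f ∈ I → Metric.ball (f x) d ⊆ u f) := by
    intro f
    by_cases hf : f ∈ I
    · obtain ⟨d, hd, hball⟩ := Metric.isOpen_iff.mp (hu f hf).1 (f x) (hu f hf).2
      exact ⟨d, hd, fun _ => hball⟩
    · exact ⟨1, one_pos, fun h => absurd h hf⟩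
  choose d hd0 hdsub using hsmall
  rcases I.eq_empty_or_nonempty with hI | hI
  · refine ⟨∅, 1, one_pos, fun y _ => ?_⟩
    have h1 : (fun f : X →L[ℝ] ℝ => f y) ∈ V := hsub (by simp [hI])
    have h2 : toWeakSpace ℝ X y ∈ (toWeakSpace ℝ X).symm ⁻¹' W := by rw [← hVeq]; exact h1
    simpa using h2
  · refine ⟨I, I.inf' hI d, ?_, fun y hy => ?_⟩
    · exact (Finset.lt_inf'_iff hI).mpr fun f hf => hd0 f
    · have h1 : (fun f : X →L[ℝ] ℝ => f y) ∈ V := by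
        apply hsub
        intro f hf
        apply hdsub f hf
        rw [Metric.mem_ball, Real.dist_eq]
        exact lt_of_lt_of_le (hy f hf) (Finset.inf'_le d hf)
      have h2 : toWeakSpace ℝ X y ∈ (toWeakSpace ℝ X).symm ⁻¹' W := by rw [← hVeq]; exact h1
      simpa using h2

/-- Scaled version of the diameter 2 property: inside any slab containing a point of the
ball of radius `b` there are two points of that ball almost `2 * b` apart. -/
lemma scaled_d2p (hD : D2P X) {ι : Type*} [Finite ι] (f : ι → X →L[ℝ] ℝ) (c : ι → ℝ)
    {δ b η : ℝ} (hδ : 0 < δ) (hb : 0 ≤ b) (hη : 0 < η) {v : X} (hv : ‖v‖ ≤ b)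
    (hvS : ∀ i, |f i v - c i| < δ) :
    ∃ y y' : X, ‖y‖ ≤ b ∧ ‖y'‖ ≤ b ∧ (∀ i, |f i y - c i| < δ) ∧ (∀ i, |f i y' - c i| < δ) ∧
      2 * b - η ≤ ‖y - y'‖ := by
  rcases le_or_gt (2 * b) η with h | h
  · exact ⟨v, v, hv, hv, hvS, hvS, by simp; linarith⟩
  · have hb0 : 0 < b := by linarith
    set V : Set X := {x : X | ∀ i, |(b • f i) x - c i| < δ} with hVdef
    have hVopen : IsWeaklyOpen V := weaklyOpen_slab (fun i => b • f i) c δ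
    have hmem : b⁻¹ • v ∈ closedBall (0 : X) 1 ∩ V := by
      constructor
      · rw [mem_closedBall_zero_iff, norm_smul, norm_inv, Real.norm_eq_abs, abs_of_pos hb0]
        rw [inv_mul_le_iff₀ hb0]
        simpa using hv
      · intro i
        have : (b • f i) (b⁻¹ • v) = f i v := by
          rw [ContinuousLinearMap.smul_apply, map_smul]
          rw [smul_smul, mul_inv_cancel₀ hb0.ne', one_smul]
        rw [this]
        exact hvS i
    have hdiam := hD V hVopen ⟨_, hmem⟩
    have hgt : ∃ u ∈ closedBall (0 : X) 1 ∩ V, ∃ u' ∈ closedBall (0 : X) 1 ∩ V,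
        2 - η / b < dist u u' := by
      by_contra hcon
      push_neg at hcon
      have hC : (0:ℝ) ≤ 2 - η / b := by
        have : η / b < 2 := (div_lt_iff₀ hb0).mpr (by linarith)
        linarith
      have h1 := Metric.diam_le_of_forall_dist_le hC fun u hu u' hu' => hcon u hu u' hu'
      rw [hdiam] at h1
      have h2 : η / b ≤ 0 := by linarith
      have h3 : 0 < η / b := div_pos hη hb0
      linarith
    obtain ⟨u, hu, u', hu', huu'⟩ := hgt
    refine ⟨b • u, b • u', ?_, ?_, ?_, ?_, ?_⟩
    · rw [norm_smul, Real.norm_eq_abs, abs_of_pos hb0]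
      have := mem_closedBall_zero_iff.mp hu.1
      nlinarith
    · rw [norm_smul, Real.norm_eq_abs, abs_of_pos hb0]
      have := mem_closedBall_zero_iff.mp hu'.1
      nlinarith
    · intro i
      have := hu.2 i
      rw [map_smul]
      exact this
    · intro i
      have := hu'.2 i
      rw [map_smul]
      exact this
    · have hnorm : ‖b • u - b • u'‖ = b * dist u u' := by
        rw [← smul_sub, norm_smul, Real.norm_eq_abs, abs_of_pos hb0, dist_eq_norm]
      rw [hnorm]
      have hm : b * (2 - η / b) ≤ b * dist u u' :=
        mul_le_mul_of_nonneg_left (le_of_lt huu') hb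
      calc 2 * b - η = b * (2 - η / b) := by field_simp
        _ ≤ b * dist u u' := hm

/-- Any subset of the closed unit ball has diameter at most 2. -/
lemma diam_le_two (S : Set X) (hS : S ⊆ closedBall 0 1) : Metric.diam S ≤ 2 := by
  apply Metric.diam_le_of_forall_dist_le (by norm_num)
  intro a ha b hb
  have ha' := mem_closedBall_zero_iff.mp (hS ha)
  have hb' := mem_closedBall_zero_iff.mp (hS hb)
  calc dist a b = ‖a - b‖ := dist_eq_norm a b
    _ ≤ ‖a‖ + ‖b‖ := norm_sub_le a b
    _ ≤ 2 := by linarith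

end Aux

section ProdAux

variable {X₁ X₂ : Type*} [NormedAddCommGroup X₁] [NormedSpace ℝ X₁]
  [NormedAddCommGroup X₂] [NormedSpace ℝ X₂] (p : ℝ≥0∞) [Fact (1 ≤ p)]

/-- The inclusion of the first summand into the `ℓ_p`-sum. -/
noncomputable def iota1 : X₁ →L[ℝ] WithLp p (X₁ × X₂) :=
  ((WithLp.prodContinuousLinearEquiv p ℝ X₁ X₂).symm : X₁ × X₂ →L[ℝ] WithLp p (X₁ × X₂)).comp
    (ContinuousLinearMap.inl ℝ X₁ X₂)

/-- The inclusion of the second summand into the `ℓ_p`-sum. -/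
noncomputable def iota2 : X₂ →L[ℝ] WithLp p (X₁ × X₂) :=
  ((WithLp.prodContinuousLinearEquiv p ℝ X₁ X₂).symm : X₁ × X₂ →L[ℝ] WithLp p (X₁ × X₂)).comp
    (ContinuousLinearMap.inr ℝ X₁ X₂)

lemma iota1_eq (a : X₁) : iota1 (X₂ := X₂) p a = (WithLp.equiv p (X₁ × X₂)).symm (a, 0) := by
  simp [iota1]

lemma iota2_eq (b : X₂) : iota2 (X₁ := X₁) p b = (WithLp.equiv p (X₁ × X₂)).symm (0, b) := by
  simp [iota2]

lemma iota_add (a : X₁) (b : X₂) :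
    iota1 p a + iota2 p b = (WithLp.equiv p (X₁ × X₂)).symm (a, b) := by
  rw [iota1_eq, iota2_eq, WithLp.equiv_symm_apply, ← WithLp.toLp_add]
  norm_num

lemma iota_add_fst (a : X₁) (b : X₂) : (iota1 p a + iota2 p b).fst = a := by
  rw [iota_add, WithLp.equiv_symm_apply, WithLp.toLp_fst]

lemma iota_add_snd (a : X₁) (b : X₂) : (iota1 p a + iota2 p b).snd = b := by
  rw [iota_add, WithLp.equiv_symm_apply, WithLp.toLp_snd]

lemma iota_sum (z : WithLp p (X₁ × X₂)) : iota1 p z.fst + iota2 p z.snd = z := by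
  rw [iota_add]
  exact (WithLp.equiv p (X₁ × X₂)).symm_apply_apply z

lemma norm_iota1 (w : X₁) : ‖iota1 (X₂ := X₂) p w‖ = ‖w‖ := by
  rw [iota1_eq]; exact WithLp.norm_toLp_fst p X₁ X₂ w

end ProdAux

/-- Monotonicity of the `ℓ_p`-sum norm with respect to coordinatewise norms. -/
lemma prod_norm_mono {α β α' β' : Type*} [NormedAddCommGroup α] [NormedAddCommGroup β]
    [NormedAddCommGroup α'] [NormedAddCommGroup β']
    {p : ℝ≥0∞} (hq : 0 < p.toReal) (x : WithLp p (α × β)) (y : WithLp p (α' × β'))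
    (h1 : ‖x.fst‖ ≤ ‖y.fst‖) (h2 : ‖x.snd‖ ≤ ‖y.snd‖) : ‖x‖ ≤ ‖y‖ := by
  rw [WithLp.prod_norm_eq_add hq, WithLp.prod_norm_eq_add hq]
  have e1 : ‖x.fst‖ ^ p.toReal ≤ ‖y.fst‖ ^ p.toReal :=
    Real.rpow_le_rpow (norm_nonneg _) h1 hq.le
  have e2 : ‖x.snd‖ ^ p.toReal ≤ ‖y.snd‖ ^ p.toReal :=
    Real.rpow_le_rpow (norm_nonneg _) h2 hq.le
  exact Real.rpow_le_rpow (by positivity) (by linarith) (by positivity)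

/-- The key scalar estimate. -/
lemma scalar_est {p : ℝ≥0∞} [Fact (1 ≤ p)] (hp : p ≠ ⊤) {b₁ b₂ A B η : ℝ}
    (hb₁ : 0 ≤ b₁) (hb₂ : 0 ≤ b₂)
    (hsum : b₁ ^ p.toReal + b₂ ^ p.toReal = 1) (hA : 0 ≤ A) (hB : 0 ≤ B) (hη : 0 < η)
    (h1 : 2*b₁ - η ≤ A) (h2 : 2*b₂ - η ≤ B) :
    2 - 2*η ≤ (A ^ p.toReal + B ^ p.toReal) ^ (1/p.toReal) := by
  have hq1 : 1 ≤ p.toReal := by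
    rw [← ENNReal.toReal_one]
    exact ENNReal.toReal_mono hp (Fact.out)
  have hq0 : 0 < p.toReal := lt_of_lt_of_le one_pos hq1
  set q := p.toReal with hqdef
  have hnorm : ∀ s t : ℝ, 0 ≤ s → 0 ≤ t →
      ‖(WithLp.equiv p (ℝ × ℝ)).symm (s, t)‖ = (s ^ q + t ^ q) ^ (1/q) := by
    intro s t hs ht
    rw [WithLp.prod_norm_eq_add hq0]
    simp only [WithLp.equiv_symm_apply, WithLp.toLp_fst, WithLp.toLp_snd]
    simp [Real.norm_eq_abs, abs_of_nonneg hs, abs_of_nonneg ht]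
    rfl
  have e2 : ‖(WithLp.equiv p (ℝ × ℝ)).symm (2*b₁, 2*b₂)‖ = 2 := by
    rw [hnorm _ _ (by positivity) (by positivity),
      Real.mul_rpow (by norm_num) hb₁, Real.mul_rpow (by norm_num) hb₂,
      ← mul_add, hsum, mul_one, ← Real.rpow_mul (by norm_num), mul_one_div,
      div_self (ne_of_gt hq0), Real.rpow_one]
  have mono : ‖(WithLp.equiv p (ℝ × ℝ)).symm (2*b₁, 2*b₂)‖
      ≤ ‖(WithLp.equiv p (ℝ × ℝ)).symm (A + η, B + η)‖ := by
    apply prod_norm_mono hq0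
    · simp only [WithLp.equiv_symm_apply, WithLp.toLp_fst]
      simp only [Real.norm_eq_abs]
      rw [abs_of_nonneg (by positivity), abs_of_nonneg (by positivity)]
      linarith
    · simp only [WithLp.equiv_symm_apply, WithLp.toLp_snd]
      simp only [Real.norm_eq_abs]
      rw [abs_of_nonneg (by positivity), abs_of_nonneg (by positivity)]
      linarith
  have split : (WithLp.equiv p (ℝ × ℝ)).symm (A + η, B + η)
      = (WithLp.equiv p (ℝ × ℝ)).symm (A, B) + (WithLp.equiv p (ℝ × ℝ)).symm (η, η) := by
    rw [WithLp.equiv_symm_apply, ← WithLp.toLp_add, Prod.mk_add_mk]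
  have etanorm : ‖(WithLp.equiv p (ℝ × ℝ)).symm (η, η)‖ ≤ 2 * η := by
    rw [hnorm _ _ hη.le hη.le]
    have hr : η ^ q + η ^ q = 2 * η ^ q := by ring
    rw [hr, Real.mul_rpow (by norm_num) (by positivity),
      ← Real.rpow_mul hη.le, mul_one_div, div_self (ne_of_gt hq0), Real.rpow_one]
    have h2q : (2:ℝ) ^ (1/q) ≤ 2 := by
      calc (2:ℝ) ^ (1/q) ≤ 2 ^ (1:ℝ) :=
            Real.rpow_le_rpow_of_exponent_le one_le_two (by
              rw [div_le_one hq0]; exact hq1)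
        _ = 2 := Real.rpow_one 2
    nlinarith
  have ABnorm : ‖(WithLp.equiv p (ℝ × ℝ)).symm (A, B)‖ = (A ^ q + B ^ q) ^ (1/q) :=
    hnorm _ _ hA hB
  have chain : (2:ℝ) ≤ (A ^ q + B ^ q) ^ (1/q) + 2 * η := by
    calc (2:ℝ) = ‖(WithLp.equiv p (ℝ × ℝ)).symm (2*b₁, 2*b₂)‖ := e2.symm
      _ ≤ ‖(WithLp.equiv p (ℝ × ℝ)).symm (A + η, B + η)‖ := mono
      _ ≤ ‖(WithLp.equiv p (ℝ × ℝ)).symm (A, B)‖ + ‖(WithLp.equiv p (ℝ × ℝ)).symm (η, η)‖ := by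
            rw [split]; exact norm_add_le _ _
      _ ≤ (A ^ q + B ^ q) ^ (1/q) + 2 * η := by rw [ABnorm]; linarith
  linarith

/-- The diameter 2 property is stable under `ℓ_p`-sums, `1 ≤ p < ∞`: if the
infinite-dimensional Banach spaces `X₁` and `X₂` both have the diameter 2 property, then so
does `X₁ ⊕_p X₂`. -/
theorem stmt_6 (X₁ X₂ : Type*) [NormedAddCommGroup X₁] [NormedSpace ℝ X₁] [CompleteSpace X₁]
    [NormedAddCommGroup X₂] [NormedSpace ℝ X₂] [CompleteSpace X₂]
    (hinf₁ : ¬ FiniteDimensional ℝ X₁) (hinf₂ : ¬ FiniteDimensional ℝ X₂)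
    (h₁ : D2P X₁) (h₂ : D2P X₂)
    (p : ℝ≥0∞) [Fact (1 ≤ p)] (hp : p ≠ ⊤) :
    D2P (WithLp p (X₁ × X₂)) := by
  have hq1 : 1 ≤ p.toReal := by
    rw [← ENNReal.toReal_one]
    exact ENNReal.toReal_mono hp (Fact.out)
  have hq0 : 0 < p.toReal := lt_of_lt_of_le one_pos hq1
  set q := p.toReal with hqdef
  intro W hW hne
  obtain ⟨x, hxB, hxW⟩ := hne
  have hbdd : Bornology.IsBounded (closedBall (0 : WithLp p (X₁ × X₂)) 1 ∩ W) :=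
    (isBounded_closedBall).subset inter_subset_left
  apply le_antisymm (diam_le_two _ inter_subset_left)
  have key : ∀ η : ℝ, 0 < η →
      ∃ u ∈ closedBall (0 : WithLp p (X₁ × X₂)) 1 ∩ W,
        ∃ v ∈ closedBall (0 : WithLp p (X₁ × X₂)) 1 ∩ W, 2 - 2*η ≤ dist u v := by
    intro η hη
    obtain ⟨I, δ, hδ, hIW⟩ := exists_basic_nhd hW hxW
    obtain ⟨w, hw1, hw0⟩ := exists_unit_ker hinf₁
      (fun f : ↥I => ((f : WithLp p (X₁ × X₂) →L[ℝ] ℝ)).comp (iota1 p))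
    -- move `x` to a point of norm exactly 1 without changing the values of the functionals
    have hcont : Continuous fun t : ℝ => ‖x + t • iota1 p w‖ :=
      (continuous_const.add (continuous_id.smul continuous_const)).norm
    have hx1 : ‖x‖ ≤ 1 := mem_closedBall_zero_iff.mp hxB
    have hφ0 : ‖x + (0:ℝ) • iota1 p w‖ ≤ 1 := by simpa using hx1
    have hφ2 : 1 ≤ ‖x + (2:ℝ) • iota1 p w‖ := by
      have h1 : ‖(2:ℝ) • iota1 (X₂ := X₂) p w‖ = 2 := by
        rw [norm_smul, norm_iota1 (X₂ := X₂) p w, hw1]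
        norm_num
      have hsub : ‖(x + (2:ℝ) • iota1 p w) - x‖ ≤ ‖x + (2:ℝ) • iota1 p w‖ + ‖x‖ :=
        norm_sub_le _ _
      rw [add_sub_cancel_left, h1] at hsub
      linarith
    obtain ⟨t, -, hx'⟩ := intermediate_value_Icc (by norm_num : (0:ℝ) ≤ 2)
      hcont.continuousOn ⟨hφ0, hφ2⟩
    set x' : WithLp p (X₁ × X₂) := x + t • iota1 p w with hx'def
    have hx'1 : ‖x'‖ = 1 := hx'
    have hfx' : ∀ f ∈ I, f x' = f x := by
      intro f hf
      have h0 := hw0 ⟨f, hf⟩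
      simp only [ContinuousLinearMap.comp_apply] at h0
      rw [hx'def, map_add, map_smul, h0]
      simp
    set b₁ := ‖x'.fst‖ with hb₁def
    set b₂ := ‖x'.snd‖ with hb₂def
    have hbsum : b₁ ^ q + b₂ ^ q = 1 := by
      have hform := WithLp.prod_norm_eq_add hq0 x'
      rw [hx'1] at hform
      have hs : (0:ℝ) ≤ b₁ ^ q + b₂ ^ q := by positivity
      calc b₁ ^ q + b₂ ^ q = ((b₁ ^ q + b₂ ^ q) ^ (1/q)) ^ q := by
            rw [← Real.rpow_mul hs, one_div_mul_cancel (ne_of_gt hq0), Real.rpow_one]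
        _ = (1:ℝ) ^ q := by rw [← hform]
        _ = 1 := Real.one_rpow q
    -- apply D2P in each coordinate
    obtain ⟨y, y', hy, hy', hCy, hCy', hyy'⟩ := scaled_d2p h₁
      (fun f : ↥I => ((f : WithLp p (X₁ × X₂) →L[ℝ] ℝ)).comp (iota1 p))
      (fun f : ↥I => (f : WithLp p (X₁ × X₂) →L[ℝ] ℝ) (iota1 p x'.fst))
      (half_pos hδ) (norm_nonneg x'.fst) hη (le_refl b₁)
      (fun i => by simpa using half_pos hδ)
    obtain ⟨z, z', hz, hz', hCz, hCz', hzz'⟩ := scaled_d2p h₂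
      (fun f : ↥I => ((f : WithLp p (X₁ × X₂) →L[ℝ] ℝ)).comp (iota2 p))
      (fun f : ↥I => (f : WithLp p (X₁ × X₂) →L[ℝ] ℝ) (iota2 p x'.snd))
      (half_pos hδ) (norm_nonneg x'.snd) hη (le_refl b₂)
      (fun i => by simpa using half_pos hδ)
    -- assemble the two far-apart points
    have hmem : ∀ (a : X₁) (b : X₂), ‖a‖ ≤ b₁ → ‖b‖ ≤ b₂ →
        (∀ i : ↥I, |(i : WithLp p (X₁ × X₂) →L[ℝ] ℝ) (iota1 p a) -
          (i : WithLp p (X₁ × X₂) →L[ℝ] ℝ) (iota1 p x'.fst)| < δ/2) →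
        (∀ i : ↥I, |(i : WithLp p (X₁ × X₂) →L[ℝ] ℝ) (iota2 p b) -
          (i : WithLp p (X₁ × X₂) →L[ℝ] ℝ) (iota2 p x'.snd)| < δ/2) →
        iota1 p a + iota2 p b ∈ closedBall (0 : WithLp p (X₁ × X₂)) 1 ∩ W := by
      intro a b ha hb hca hcb
      constructor
      · rw [mem_closedBall_zero_iff, WithLp.prod_norm_eq_add hq0, iota_add_fst, iota_add_snd]
        have e1 : ‖a‖ ^ q ≤ b₁ ^ q := Real.rpow_le_rpow (norm_nonneg _) ha hq0.le
        have e2 : ‖b‖ ^ q ≤ b₂ ^ q := Real.rpow_le_rpow (norm_nonneg _) hb hq0.le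
        calc (‖a‖ ^ q + ‖b‖ ^ q) ^ (1/q) ≤ (b₁ ^ q + b₂ ^ q) ^ (1/q) :=
              Real.rpow_le_rpow (by positivity) (by linarith) (by positivity)
          _ = 1 := by rw [hbsum, Real.one_rpow]
      · apply hIW
        intro f hf
        have hyc := hca ⟨f, hf⟩
        have hzc := hcb ⟨f, hf⟩
        have hdecomp : f (iota1 p a + iota2 p b) - f x'
            = (f (iota1 p a) - f (iota1 p x'.fst)) + (f (iota2 p b) - f (iota2 p x'.snd)) := by
          have hx'sum : f x' = f (iota1 p x'.fst) + f (iota2 p x'.snd) := by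
            conv_lhs => rw [← iota_sum p x']
            rw [map_add]
          rw [map_add, hx'sum]
          ring
        have habs : |f (iota1 p a + iota2 p b) - f x'| < δ := by
          rw [hdecomp]
          calc |(f (iota1 p a) - f (iota1 p x'.fst)) + (f (iota2 p b) - f (iota2 p x'.snd))|
              ≤ |f (iota1 p a) - f (iota1 p x'.fst)| + |f (iota2 p b) - f (iota2 p x'.snd)| :=
                abs_add_le _ _
            _ < δ/2 + δ/2 := add_lt_add hyc hzc
            _ = δ := add_halves δ
        rwa [hfx' f hf] at habs
    have hCy2 : ∀ i : ↥I, |(i : WithLp p (X₁ × X₂) →L[ℝ] ℝ) (iota1 p y) -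
        (i : WithLp p (X₁ × X₂) →L[ℝ] ℝ) (iota1 p x'.fst)| < δ/2 := by
      intro i; simpa using hCy i
    have hCy2' : ∀ i : ↥I, |(i : WithLp p (X₁ × X₂) →L[ℝ] ℝ) (iota1 p y') -
        (i : WithLp p (X₁ × X₂) →L[ℝ] ℝ) (iota1 p x'.fst)| < δ/2 := by
      intro i; simpa using hCy' i
    have hCz2 : ∀ i : ↥I, |(i : WithLp p (X₁ × X₂) →L[ℝ] ℝ) (iota2 p z) -
        (i : WithLp p (X₁ × X₂) →L[ℝ] ℝ) (iota2 p x'.snd)| < δ/2 := by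
      intro i; simpa using hCz i
    have hCz2' : ∀ i : ↥I, |(i : WithLp p (X₁ × X₂) →L[ℝ] ℝ) (iota2 p z') -
        (i : WithLp p (X₁ × X₂) →L[ℝ] ℝ) (iota2 p x'.snd)| < δ/2 := by
      intro i; simpa using hCz' i
    refine ⟨iota1 p y + iota2 p z, hmem y z hy hz hCy2 hCz2,
      iota1 p y' + iota2 p z', hmem y' z' hy' hz' hCy2' hCz2', ?_⟩
    have hdiff : (iota1 p y + iota2 p z) - (iota1 p y' + iota2 p z')
        = iota1 p (y - y') + iota2 p (z - z') := by
      rw [map_sub, map_sub]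
      abel
    rw [dist_eq_norm, hdiff, WithLp.prod_norm_eq_add hq0, iota_add_fst, iota_add_snd]
    exact scalar_est hp (norm_nonneg _) (norm_nonneg _) hbsum (norm_nonneg _) (norm_nonneg _)
      hη hyy' hzz'
  -- conclude
  by_contra hcon
  push_neg at hcon
  set d := Metric.diam (closedBall (0 : WithLp p (X₁ × X₂)) 1 ∩ W) with hd
  have hd0 : 0 ≤ d := Metric.diam_nonneg
  obtain ⟨u, hu, v, hv, huv⟩ := key ((2 - d)/4) (by linarith)
  have hle : dist u v ≤ d := Metric.dist_le_diam_of_mem hbdd hu hv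
  linarith
end

section
/- If X₁ and X₂ are infinite-dimensional Banach spaces each having the local diameter 2 property, then for every 1 ≤ p < ∞, the ℓp-sum X₁ ⊕_p X₂ has the local diameter 2 property. -/
open Metric Set
open scoped ENNReal

/-- Auxiliary: from the local diameter 2 property, for any functional `g` of norm at most 1
and any vector `w`, we can find a replacement `w'` and almost diametral points `u, u'` of the
unit ball that almost norm `g`, scaled appropriately. -/
lemma slice_pair_aux {X : Type*} [NormedAddCommGroup X] [NormedSpace ℝ X]
    (h : LocalD2P X) (g : X →L[ℝ] ℝ) (hg : ‖g‖ ≤ 1) (w : X) {δ : ℝ}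
    (hδ : 0 < δ) (hδ1 : δ ≤ 1/2) :
    ∃ w' u u' : X, ‖w'‖ ≤ ‖w‖ ∧ g w' = g w ∧ g w' ≤ ‖w'‖ ∧ ‖u‖ ≤ 1 ∧ ‖u'‖ ≤ 1 ∧
      (1-δ) * g w' ≤ ‖w'‖ * g u ∧ (1-δ) * g w' ≤ ‖w'‖ * g u' ∧
      (2-δ) * ‖w'‖ ≤ ‖w'‖ * ‖u - u'‖ := by
  by_cases hg0 : g = 0
  · subst hg0
    exact ⟨0, 0, 0, by simp, by simp, by simp, by simp, by simp, by simp, by simp, by simp⟩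
  · have hgn : 0 < ‖g‖ := norm_pos_iff.mpr hg0
    set g' : X →L[ℝ] ℝ := ‖g‖⁻¹ • g with hg'
    have hg'n : ‖g'‖ = 1 := by
      rw [hg', norm_smul (‖g‖⁻¹) g, norm_inv, norm_norm, inv_mul_cancel₀ hgn.ne']
    have hd := h g' δ hg'n hδ
    have hex : ∃ u ∈ Slice g' δ, ∃ u' ∈ Slice g' δ, 2 - δ < dist u u' := by
      by_contra hc
      push_neg at hc
      have : Metric.diam (Slice g' δ) ≤ 2 - δ :=
        Metric.diam_le_of_forall_dist_le (by linarith) hc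
      rw [hd] at this; linarith
    obtain ⟨u, ⟨hu1, hu2⟩, u', ⟨hu'1, hu'2⟩, hdist⟩ := hex
    have hguval : ∀ z : X, g' z = ‖g‖⁻¹ * g z := fun z => by
      simp [hg', ContinuousLinearMap.smul_apply, smul_eq_mul]
    have hgu : (1 - δ) * ‖g‖ < g u := by
      have := hu2
      rw [hguval u] at this
      have h2 : ‖g‖ * (1 - δ) < ‖g‖ * (‖g‖⁻¹ * g u) := by
        exact (mul_lt_mul_iff_right₀ hgn).mpr this
      rw [← mul_assoc, mul_inv_cancel₀ hgn.ne', one_mul] at h2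
      linarith
    have hgu' : (1 - δ) * ‖g‖ < g u' := by
      have := hu'2
      rw [hguval u'] at this
      have h2 : ‖g‖ * (1 - δ) < ‖g‖ * (‖g‖⁻¹ * g u') := by
        exact (mul_lt_mul_iff_right₀ hgn).mpr this
      rw [← mul_assoc, mul_inv_cancel₀ hgn.ne', one_mul] at h2
      linarith
    have hgw : g w ≤ ‖g‖ * ‖w‖ := by
      calc g w ≤ |g w| := le_abs_self _
        _ = ‖g w‖ := (Real.norm_eq_abs _).symm
        _ ≤ ‖g‖ * ‖w‖ := g.le_opNorm w
    have hwn : (0:ℝ) ≤ ‖w‖ := norm_nonneg w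
    refine ⟨w, u, u', le_refl _, rfl, ?_, hu1, hu'1, ?_, ?_, ?_⟩
    · linarith [mul_le_mul_of_nonneg_right hg hwn]
    · linarith [mul_le_mul_of_nonneg_left hgu.le hwn,
        mul_le_mul_of_nonneg_left hgw (show (0:ℝ) ≤ 1 - δ by linarith)]
    · linarith [mul_le_mul_of_nonneg_left hgu'.le hwn,
        mul_le_mul_of_nonneg_left hgw (show (0:ℝ) ≤ 1 - δ by linarith)]
    · rw [dist_eq_norm] at hdist
      linarith [mul_le_mul_of_nonneg_left hdist.le hwn]

set_option maxHeartbeats 2000000 in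
/-- The local diameter 2 property is stable under `ℓ_p`-sums, `1 ≤ p < ∞`: if the
infinite-dimensional Banach spaces `X₁` and `X₂` both have the local diameter 2 property,
then so does `X₁ ⊕_p X₂`. -/
theorem stmt_7 (X₁ X₂ : Type*) [NormedAddCommGroup X₁] [NormedSpace ℝ X₁] [CompleteSpace X₁]
    [NormedAddCommGroup X₂] [NormedSpace ℝ X₂] [CompleteSpace X₂]
    (hinf₁ : ¬ FiniteDimensional ℝ X₁) (hinf₂ : ¬ FiniteDimensional ℝ X₂)
    (h₁ : LocalD2P X₁) (h₂ : LocalD2P X₂)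
    (p : ℝ≥0∞) [Fact (1 ≤ p)] (hp : p ≠ ⊤) :
    LocalD2P (WithLp p (X₁ × X₂)) := by
  intro f ε hf hε
  set pr := p.toReal with hprdef
  have hpr1 : 1 ≤ pr := by
    have h1 : (1:ℝ≥0∞) ≤ p := Fact.out
    have := ENNReal.toReal_mono hp h1
    simpa using this
  have hpr0 : (0:ℝ) < pr := lt_of_lt_of_le one_pos hpr1
  have hprne : pr ≠ 0 := hpr0.ne'
  set j : (X₁ × X₂) ≃L[ℝ] WithLp p (X₁ × X₂) :=
    (WithLp.prodContinuousLinearEquiv p ℝ X₁ X₂).symm with hjdef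
  have hjn : ∀ (u : X₁) (v : X₂), ‖j (u, v)‖ = (‖u‖ ^ pr + ‖v‖ ^ pr) ^ (1/pr) := by
    intro u v
    rw [WithLp.prod_norm_eq_add hpr0]
    rfl
  set f₁ : X₁ →L[ℝ] ℝ :=
    f.comp ((j : (X₁ × X₂) →L[ℝ] WithLp p (X₁ × X₂)).comp (ContinuousLinearMap.inl ℝ X₁ X₂))
    with hf1def
  set f₂ : X₂ →L[ℝ] ℝ :=
    f.comp ((j : (X₁ × X₂) →L[ℝ] WithLp p (X₁ × X₂)).comp (ContinuousLinearMap.inr ℝ X₁ X₂))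
    with hf2def
  have hsplit : ∀ (u : X₁) (v : X₂), f (j (u, v)) = f₁ u + f₂ v := by
    intro u v
    have h1 : ((u, v) : X₁ × X₂) = (u, 0) + (0, v) := by simp
    rw [h1, map_add j, map_add f]
    rfl
  have hrpowinv : ∀ t : ℝ, 0 ≤ t → (t ^ pr) ^ (1/pr) = t := by
    intro t ht
    rw [one_div, Real.rpow_rpow_inv ht hprne]
  have hj1 : ∀ u : X₁, ‖j (u, 0)‖ = ‖u‖ := by
    intro u
    rw [hjn, norm_zero, Real.zero_rpow hprne, add_zero, hrpowinv _ (norm_nonneg u)]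
  have hj2 : ∀ v : X₂, ‖j (0, v)‖ = ‖v‖ := by
    intro v
    rw [hjn, norm_zero, Real.zero_rpow hprne, zero_add, hrpowinv _ (norm_nonneg v)]
  have hf1n : ‖f₁‖ ≤ 1 := by
    refine ContinuousLinearMap.opNorm_le_bound _ zero_le_one fun u => ?_
    have : f₁ u = f (j (u, 0)) := rfl
    rw [this, one_mul]
    calc ‖f (j (u, 0))‖ ≤ ‖f‖ * ‖j (u, 0)‖ := f.le_opNorm _
      _ = ‖u‖ := by rw [hf, one_mul, hj1]
  have hf2n : ‖f₂‖ ≤ 1 := by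
    refine ContinuousLinearMap.opNorm_le_bound _ zero_le_one fun v => ?_
    have : f₂ v = f (j (0, v)) := rfl
    rw [this, one_mul]
    calc ‖f (j (0, v))‖ ≤ ‖f‖ * ‖j (0, v)‖ := f.le_opNorm _
      _ = ‖v‖ := by rw [hf, one_mul, hj2]
  -- Slice is bounded
  have hsub : Slice f ε ⊆ closedBall (0 : WithLp p (X₁ × X₂)) 1 := by
    intro w hw
    rw [mem_closedBall, dist_zero_right]
    exact hw.1
  have hbdd : Bornology.IsBounded (Slice f ε) :=
    (Metric.isBounded_closedBall).subset hsub
  refine le_antisymm ?_ ?_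
  · refine Metric.diam_le_of_forall_dist_le (by norm_num) fun a ha b hb => ?_
    rw [dist_eq_norm]
    calc ‖a - b‖ ≤ ‖a‖ + ‖b‖ := norm_sub_le a b
      _ ≤ 2 := by have := ha.1; have := hb.1; linarith
  · have key : ∀ δ : ℝ, 0 < δ → δ ≤ ε/2 → δ ≤ 1/2 → 2 - 3*δ ≤ Metric.diam (Slice f ε) := by
      intro δ hδ hδε hδ1
      obtain ⟨x, hx1, hx2⟩ := f.exists_lt_apply_of_lt_opNorm (r := 1 - δ) (by rw [hf]; linarith)
      -- arrange f x₀ > 1 - δ with ‖x₀‖ ≤ 1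
      obtain ⟨x₀, hx₀n, hx₀f⟩ : ∃ x₀ : WithLp p (X₁ × X₂), ‖x₀‖ ≤ 1 ∧ 1 - δ < f x₀ := by
        rcases le_or_gt 0 (f x) with hc | hc
        · exact ⟨x, hx1.le, by rwa [Real.norm_eq_abs, abs_of_nonneg hc] at hx2⟩
        · refine ⟨-x, by rw [norm_neg]; exact hx1.le, ?_⟩
          rw [map_neg]
          rwa [Real.norm_eq_abs, abs_of_neg hc] at hx2
      set w₁ : X₁ := (j.symm x₀).1 with hw₁def
      set w₂ : X₂ := (j.symm x₀).2 with hw₂def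
      have hxj : j (w₁, w₂) = x₀ := by
        rw [hw₁def, hw₂def]
        rw [Prod.mk.eta]
        exact j.apply_symm_apply x₀
      have hfx : f x₀ = f₁ w₁ + f₂ w₂ := by rw [← hxj, hsplit]
      obtain ⟨w₁', u, u', hw1le, hgw1, hgwle1, hu, hu', hA1, hA1', hB1⟩ :=
        slice_pair_aux h₁ f₁ hf1n w₁ hδ hδ1
      obtain ⟨w₂', v, v', hw2le, hgw2, hgwle2, hv, hv', hA2, hA2', hB2⟩ :=
        slice_pair_aux h₂ f₂ hf2n w₂ hδ hδ1
      have ha : (0:ℝ) ≤ ‖w₁'‖ := norm_nonneg _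
      have hb : (0:ℝ) ≤ ‖w₂'‖ := norm_nonneg _
      -- the sum of pr-th powers is at most 1
      have hsum_le : ‖w₁'‖ ^ pr + ‖w₂'‖ ^ pr ≤ 1 := by
        have hx₀eq : ‖x₀‖ = (‖w₁‖ ^ pr + ‖w₂‖ ^ pr) ^ (1/pr) := by rw [← hxj, hjn]
        have hS0 : (0:ℝ) ≤ ‖w₁‖ ^ pr + ‖w₂‖ ^ pr := by positivity
        have hS1 : ‖w₁‖ ^ pr + ‖w₂‖ ^ pr ≤ 1 := by
          have h3 : ((‖w₁‖ ^ pr + ‖w₂‖ ^ pr) ^ (1/pr)) ^ pr ≤ 1 ^ pr := by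
            refine Real.rpow_le_rpow (by positivity) ?_ hpr0.le
            rw [← hx₀eq]; exact hx₀n
          rwa [one_div, Real.rpow_inv_rpow hS0 hprne, Real.one_rpow] at h3
        have h4 : ‖w₁'‖ ^ pr ≤ ‖w₁‖ ^ pr := Real.rpow_le_rpow ha hw1le hpr0.le
        have h5 : ‖w₂'‖ ^ pr ≤ ‖w₂‖ ^ pr := Real.rpow_le_rpow hb hw2le hpr0.le
        linarith
      have hfx' : 1 - δ < f₁ w₁' + f₂ w₂' := by rw [hgw1, hgw2, ← hfx]; exact hx₀f
      -- lower bound on the sum of pr-th powers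
      have hsum_ge : (1-δ) ^ pr ≤ ‖w₁'‖ ^ pr + ‖w₂'‖ ^ pr := by
        have hS0 : (0:ℝ) ≤ ‖w₁'‖ ^ pr + ‖w₂'‖ ^ pr := by positivity
        have hfle : f (j (w₁', w₂')) ≤ ‖j (w₁', w₂')‖ := by
          calc f (j (w₁', w₂')) ≤ |f (j (w₁', w₂'))| := le_abs_self _
            _ = ‖f (j (w₁', w₂'))‖ := (Real.norm_eq_abs _).symm
            _ ≤ ‖f‖ * ‖j (w₁', w₂')‖ := f.le_opNorm _
            _ = ‖j (w₁', w₂')‖ := by rw [hf, one_mul]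
        rw [hsplit, hjn] at hfle
        have h6 : 1 - δ < (‖w₁'‖ ^ pr + ‖w₂'‖ ^ pr) ^ (1/pr) := lt_of_lt_of_le hfx' hfle
        have h7 : (1-δ) ^ pr ≤ ((‖w₁'‖ ^ pr + ‖w₂'‖ ^ pr) ^ (1/pr)) ^ pr :=
          Real.rpow_le_rpow (by linarith) h6.le hpr0.le
        rwa [one_div, Real.rpow_inv_rpow hS0 hprne] at h7
      -- the two candidate points
      set y := j (‖w₁'‖ • u, ‖w₂'‖ • v) with hydef
      set z := j (‖w₁'‖ • u', ‖w₂'‖ • v') with hzdef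
      have hnorm_smul : ∀ (c : ℝ) (_ : 0 ≤ c) (s : X₁), ‖c • s‖ = c * ‖s‖ := by
        intro c hc s; rw [norm_smul, Real.norm_eq_abs, abs_of_nonneg hc]
      have hnorm_smul₂ : ∀ (c : ℝ) (_ : 0 ≤ c) (s : X₂), ‖c • s‖ = c * ‖s‖ := by
        intro c hc s; rw [norm_smul, Real.norm_eq_abs, abs_of_nonneg hc]
      -- membership in the slice
      have hmem : ∀ (s : X₁) (t : X₂), ‖s‖ ≤ 1 → ‖t‖ ≤ 1 →
          (1-δ) * f₁ w₁' ≤ ‖w₁'‖ * f₁ s → (1-δ) * f₂ w₂' ≤ ‖w₂'‖ * f₂ t →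
          j (‖w₁'‖ • s, ‖w₂'‖ • t) ∈ Slice f ε := by
        intro s t hs ht hAs hAt
        constructor
        · rw [hjn]
          have h8 : ‖‖w₁'‖ • s‖ ^ pr ≤ ‖w₁'‖ ^ pr := by
            refine Real.rpow_le_rpow (norm_nonneg _) ?_ hpr0.le
            rw [hnorm_smul _ ha]
            calc ‖w₁'‖ * ‖s‖ ≤ ‖w₁'‖ * 1 := mul_le_mul_of_nonneg_left hs ha
              _ = ‖w₁'‖ := mul_one _
          have h9 : ‖‖w₂'‖ • t‖ ^ pr ≤ ‖w₂'‖ ^ pr := by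
            refine Real.rpow_le_rpow (norm_nonneg _) ?_ hpr0.le
            rw [hnorm_smul₂ _ hb]
            calc ‖w₂'‖ * ‖t‖ ≤ ‖w₂'‖ * 1 := mul_le_mul_of_nonneg_left ht hb
              _ = ‖w₂'‖ := mul_one _
          calc (‖‖w₁'‖ • s‖ ^ pr + ‖‖w₂'‖ • t‖ ^ pr) ^ (1/pr)
              ≤ (1:ℝ) ^ (1/pr) := by
                refine Real.rpow_le_rpow (by positivity) (by linarith) (by positivity)
            _ = 1 := Real.one_rpow _
        · show 1 - ε < f (j (‖w₁'‖ • s, ‖w₂'‖ • t))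
          rw [hsplit, map_smul, map_smul, smul_eq_mul, smul_eq_mul]
          have hprod := mul_lt_mul_of_pos_left hfx' (show (0:ℝ) < 1 - δ by linarith)
          nlinarith [hAs, hAt, hprod, sq_nonneg δ]
      have hy : y ∈ Slice f ε := hmem u v hu hv hA1 hA2
      have hz : z ∈ Slice f ε := hmem u' v' hu' hv' hA1' hA2'
      -- the distance bound
      have hdistyz : 2 - 3*δ ≤ dist y z := by
        have hyz : y - z = j (‖w₁'‖ • (u - u'), ‖w₂'‖ • (v - v')) := by
          rw [hydef, hzdef, ← map_sub j]
          congr 1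
          rw [Prod.mk_sub_mk, smul_sub, smul_sub]
        rw [dist_eq_norm, hyz, hjn, hnorm_smul _ ha, hnorm_smul₂ _ hb]
        have h2δ : (0:ℝ) ≤ 2 - δ := by linarith
        have h10 : ((2-δ) * ‖w₁'‖) ^ pr ≤ (‖w₁'‖ * ‖u - u'‖) ^ pr :=
          Real.rpow_le_rpow (by positivity) (by linarith [hB1]) hpr0.le
        have h11 : ((2-δ) * ‖w₂'‖) ^ pr ≤ (‖w₂'‖ * ‖v - v'‖) ^ pr :=
          Real.rpow_le_rpow (by positivity) (by linarith [hB2]) hpr0.le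
        have h12 : ((2-δ) * ‖w₁'‖) ^ pr = (2-δ) ^ pr * ‖w₁'‖ ^ pr :=
          Real.mul_rpow h2δ ha
        have h13 : ((2-δ) * ‖w₂'‖) ^ pr = (2-δ) ^ pr * ‖w₂'‖ ^ pr :=
          Real.mul_rpow h2δ hb
        have h14 : (2-δ) ^ pr * ((1-δ) ^ pr) ≤
            (‖w₁'‖ * ‖u - u'‖) ^ pr + (‖w₂'‖ * ‖v - v'‖) ^ pr := by
          have hnn : (0:ℝ) ≤ (2-δ) ^ pr := by positivity
          have := mul_le_mul_of_nonneg_left hsum_ge hnn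
          linarith [h10, h11, h12, h13]
        have h15 : ((2-δ) * (1-δ)) ^ pr = (2-δ) ^ pr * (1-δ) ^ pr :=
          Real.mul_rpow h2δ (by linarith)
        have h16 : ((2-δ) * (1-δ)) ^ pr ≤
            (‖w₁'‖ * ‖u - u'‖) ^ pr + (‖w₂'‖ * ‖v - v'‖) ^ pr := by
          rw [h15]; exact h14
        have h17 : (((2-δ) * (1-δ)) ^ pr) ^ (1/pr) ≤
            ((‖w₁'‖ * ‖u - u'‖) ^ pr + (‖w₂'‖ * ‖v - v'‖) ^ pr) ^ (1/pr) :=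
          Real.rpow_le_rpow
            (Real.rpow_nonneg (mul_nonneg (by linarith) (by linarith)) _) h16 (by positivity)
        rw [hrpowinv _ (mul_nonneg (by linarith) (by linarith))] at h17
        nlinarith [h17, sq_nonneg δ]
      calc 2 - 3*δ ≤ dist y z := hdistyz
        _ ≤ Metric.diam (Slice f ε) := Metric.dist_le_diam_of_mem hbdd hy hz
    by_contra hlt
    push_neg at hlt
    set d := Metric.diam (Slice f ε) with hddef
    set δ := min (min (ε/2) (1/2)) ((2 - d)/4) with hδdef
    have hδpos : 0 < δ := by
      refine lt_min (lt_min (by linarith) (by norm_num)) (by linarith)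
    have h1 : δ ≤ ε/2 := le_trans (min_le_left _ _) (min_le_left _ _)
    have h2 : δ ≤ 1/2 := le_trans (min_le_left _ _) (min_le_right _ _)
    have h3 : δ ≤ (2 - d)/4 := min_le_right _ _
    have := key δ hδpos h1 h2
    linarith
end

section
/- Let X be a Banach space such that for every finite family of slices S₁, …, Sₙ of B_X and every ε > 0 there exist points h_j ∈ S_j and a single element φ ∈ B_X with h_j ± φ ∈ S_j for all j and ‖φ‖ > 1 − ε. Then X has the strong diameter 2 property: every finite convex combination of slices of B_X has diameter 2. -/
open Metric Set
open scoped ENNReal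

/-- If for every finite family of slices `S₁, …, Sₙ` of `B_X` and every `ε > 0` there exist
points `h_j ∈ S_j` and a single `φ ∈ B_X` with `h_j ± φ ∈ S_j` for all `j` and
`‖φ‖ > 1 − ε`, then `X` has the strong diameter 2 property. -/
theorem stmt_10 (X : Type*) [NormedAddCommGroup X] [NormedSpace ℝ X] [CompleteSpace X]
    (h : ∀ (n : ℕ) (f : Fin n → X →L[ℝ] ℝ) (ε : Fin n → ℝ),
      (∀ i, ‖f i‖ = 1) → (∀ i, 0 < ε i) → ∀ η : ℝ, 0 < η →
      ∃ (hh : Fin n → X) (φ : X), ‖φ‖ ≤ 1 ∧ 1 - η < ‖φ‖ ∧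
        ∀ i, hh i ∈ Slice (f i) (ε i) ∧
          hh i + φ ∈ Slice (f i) (ε i) ∧ hh i - φ ∈ Slice (f i) (ε i)) :
    StrongD2P X := by
  intro n lam f ε hlam hsum hf hε
  have hnorm : ∀ x ∈ CombSlices lam f ε, ‖x‖ ≤ 1 := by
    rintro x ⟨g, hg, rfl⟩
    calc ‖∑ i, lam i • g i‖ ≤ ∑ i, ‖lam i • g i‖ := norm_sum_le _ _
      _ ≤ ∑ i, lam i := by
          refine Finset.sum_le_sum fun i _ => ?_
          rw [norm_smul, Real.norm_of_nonneg (hlam i)]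
          calc lam i * ‖g i‖ ≤ lam i * 1 :=
                mul_le_mul_of_nonneg_left (hg i).1 (hlam i)
            _ = lam i := mul_one _
      _ = 1 := hsum
  have hsub : CombSlices lam f ε ⊆ closedBall (0:X) 1 := fun x hx => by
    simpa [mem_closedBall, dist_eq_norm] using hnorm x hx
  have hbdd : Bornology.IsBounded (CombSlices lam f ε) :=
    (Metric.isBounded_closedBall).subset hsub
  have hle : Metric.diam (CombSlices lam f ε) ≤ 2 := by
    refine Metric.diam_le_of_forall_dist_le (by norm_num) fun x hx y hy => ?_
    calc dist x y ≤ ‖x‖ + ‖y‖ := dist_le_norm_add_norm x y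
      _ ≤ 1 + 1 := add_le_add (hnorm x hx) (hnorm y hy)
      _ = 2 := by norm_num
  have hge : 2 ≤ Metric.diam (CombSlices lam f ε) := by
    refine le_of_forall_pos_lt_add fun δ hδ => ?_
    obtain ⟨hh, φ, hφ1, hφ2, hhi⟩ := h n f ε hf hε (δ / 2) (by linarith)
    set s : X := ∑ i, lam i • hh i with hs
    have key : ∀ (ψ : X), (∀ i, hh i + ψ ∈ Slice (f i) (ε i)) →
        s + ψ ∈ CombSlices lam f ε := by
      intro ψ hψ
      refine ⟨fun i => hh i + ψ, hψ, ?_⟩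
      have : ∑ i, lam i • (hh i + ψ) = (∑ i, lam i • hh i) + (∑ i, lam i) • ψ := by
        simp [smul_add, Finset.sum_add_distrib, Finset.sum_smul]
      rw [this, hsum, one_smul, hs]
    have hx : s + φ ∈ CombSlices lam f ε := key φ fun i => (hhi i).2.1
    have hy : s + (-φ) ∈ CombSlices lam f ε := key (-φ) fun i => by
      simpa [sub_eq_add_neg] using (hhi i).2.2
    have hdist : dist (s + φ) (s + (-φ)) = 2 * ‖φ‖ := by
      rw [dist_eq_norm]
      have : s + φ - (s + (-φ)) = (2:ℝ) • φ := by
        module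
      rw [this, norm_smul]
      norm_num
    have := Metric.dist_le_diam_of_mem hbdd hx hy
    rw [hdist] at this
    nlinarith
  linarith
end

section
/- If X has the Daugavet property, then for every ε > 0, every y₀ ∈ X, and every slice S(x₀*, α₀) of B_X, there is a slice S(x₁*, α₁) ⊆ S(x₀*, α₀) such that ‖λx + y₀‖ ≥ λ + ‖y₀‖ − ε for every x ∈ S(x₁*, α₁) and every 0 ≤ λ ≤ 1. -/
open Metric Set
open scoped ENNReal

/-- The Daugavet property: `‖I + T‖ = 1 + ‖T‖` for every rank-one operator `T = f ⊗ y`. -/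
def HasDaugavetProperty (X : Type*) [NormedAddCommGroup X] [NormedSpace ℝ X] : Prop :=
  ∀ (f : X →L[ℝ] ℝ) (y : X),
    ‖ContinuousLinearMap.id ℝ X + f.smulRight y‖ = 1 + ‖f.smulRight y‖

set_option maxHeartbeats 1600000 in
/-- In a space with the Daugavet property, inside every slice of the unit ball one can find
a smaller slice on which `‖λx + y₀‖ ≥ λ + ‖y₀‖ − ε` for all `0 ≤ λ ≤ 1`. -/
theorem stmt_11 (X : Type*) [NormedAddCommGroup X] [NormedSpace ℝ X] [CompleteSpace X]
    (h : HasDaugavetProperty X) :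
    ∀ ε : ℝ, 0 < ε → ∀ y₀ : X, ∀ (x₀ : X →L[ℝ] ℝ) (α₀ : ℝ), ‖x₀‖ = 1 → 0 < α₀ →
      ∃ (x₁ : X →L[ℝ] ℝ) (α₁ : ℝ), ‖x₁‖ = 1 ∧ 0 < α₁ ∧
        Slice x₁ α₁ ⊆ Slice x₀ α₀ ∧
        ∀ x ∈ Slice x₁ α₁, ∀ lam : ℝ, 0 ≤ lam → lam ≤ 1 →
          lam + ‖y₀‖ - ε ≤ ‖lam • x + y₀‖ := by
  intro ε hε y₀ x₀ α₀ hx₀ hα₀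
  by_cases hy : y₀ = 0
  · -- trivial case y₀ = 0
    subst hy
    refine ⟨x₀, min α₀ ε, hx₀, lt_min hα₀ hε, ?_, ?_⟩
    · intro x hx
      exact ⟨hx.1, by have := min_le_left α₀ ε; have := hx.2; linarith⟩
    · intro x hx lam h0 h1
      have hxn : 1 - ε < ‖x‖ := by
        have h2 : x₀ x ≤ ‖x‖ := by
          calc x₀ x ≤ |x₀ x| := le_abs_self _
          _ ≤ ‖x₀‖ * ‖x‖ := x₀.le_opNorm x
          _ = ‖x‖ := by rw [hx₀, one_mul]
        have := hx.2
        have : 1 - min α₀ ε ≤ 1 - ε → True := fun _ => trivial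
        nlinarith [min_le_right α₀ ε, hx.2]
      have : ‖lam • x + 0‖ = lam * ‖x‖ := by
        rw [add_zero, norm_smul, Real.norm_eq_abs, abs_of_nonneg h0]
      rw [this, norm_zero]
      nlinarith
  · -- main case
    set r := ‖y₀‖ with hr_def
    have hr : 0 < r := norm_pos_iff.mpr hy
    set y : X := r⁻¹ • y₀ with hy_def
    have hyn : ‖y‖ = 1 := by
      rw [hy_def, norm_smul, norm_inv, norm_norm, inv_mul_cancel₀ hr.ne']
    have hy₀ : y₀ = r • y := by
      rw [hy_def, smul_inv_smul₀ hr.ne']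
    set δ : ℝ := min (α₀ / 4) (min (ε / (4 + 2 * r)) (1 / 2)) with hδ_def
    have hden : (0:ℝ) < 4 + 2 * r := by linarith
    have hδ : 0 < δ := by
      refine lt_min (by linarith) (lt_min (div_pos hε hden) (by norm_num))
    have hδ1 : δ ≤ 1 / 2 := le_trans (min_le_right _ _) (min_le_right _ _)
    have hδ2 : 4 * δ ≤ α₀ := by
      have := min_le_left (α₀ / 4) (min (ε / (4 + 2 * r)) (1 / 2))
      linarith
    have hδ3 : (4 + 2 * r) * δ ≤ ε := by
      have h1 : δ ≤ ε / (4 + 2 * r) :=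
        le_trans (min_le_right _ _) (min_le_left _ _)
      calc (4 + 2 * r) * δ ≤ (4 + 2 * r) * (ε / (4 + 2 * r)) := by
            exact mul_le_mul_of_nonneg_left h1 (le_of_lt hden)
      _ = ε := by field_simp
    -- apply the Daugavet property
    set T := x₀.smulRight y with hT_def
    have hTn : ‖T‖ = 1 := by
      rw [hT_def, ContinuousLinearMap.norm_smulRight_apply, hx₀, hyn, one_mul]
    have hIT : (2 : ℝ) - δ < ‖ContinuousLinearMap.id ℝ X + T‖ := by
      rw [h x₀ y, hTn]; linarith
    obtain ⟨z₀, hz₀1, hz₀2⟩ :=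
      (ContinuousLinearMap.id ℝ X + T).exists_lt_apply_of_lt_opNorm hIT
    have happ : ∀ w : X, (ContinuousLinearMap.id ℝ X + T) w = w + x₀ w • y := by
      intro w
      simp [hT_def, ContinuousLinearMap.add_apply]
    -- adjust sign
    obtain ⟨z, hz1, hz3, hz2⟩ :
        ∃ z : X, ‖z‖ ≤ 1 ∧ 0 ≤ x₀ z ∧ 2 - δ < ‖z + x₀ z • y‖ := by
      rw [happ z₀] at hz₀2
      rcases le_or_gt 0 (x₀ z₀) with hc | hc
      · exact ⟨z₀, le_of_lt hz₀1, hc, hz₀2⟩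
      · refine ⟨-z₀, by simpa using le_of_lt hz₀1, by rw [map_neg]; linarith, ?_⟩
        have hrw : -z₀ + x₀ (-z₀) • y = -(z₀ + x₀ z₀ • y) := by
          rw [map_neg, neg_smul, neg_add]
        rw [hrw, norm_neg]
        exact hz₀2
    have hx₀z1 : x₀ z ≤ 1 := by
      calc x₀ z ≤ |x₀ z| := le_abs_self _
      _ ≤ ‖x₀‖ * ‖z‖ := x₀.le_opNorm z
      _ ≤ 1 := by rw [hx₀, one_mul]; exact hz1
    have hx₀z : 1 - δ < x₀ z := by
      have hb : ‖z + x₀ z • y‖ ≤ 1 + x₀ z := by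
        calc ‖z + x₀ z • y‖ ≤ ‖z‖ + ‖x₀ z • y‖ := norm_add_le _ _
        _ = ‖z‖ + |x₀ z| := by rw [norm_smul, Real.norm_eq_abs, hyn, mul_one]
        _ ≤ 1 + x₀ z := by rw [abs_of_nonneg hz3]; linarith
      linarith
    have hzy : 2 - 2 * δ < ‖z + y‖ := by
      have hrw : z + x₀ z • y = (z + y) - (1 - x₀ z) • y := by
        rw [sub_smul, one_smul]; abel
      have : ‖z + x₀ z • y‖ ≤ ‖z + y‖ + ‖(1 - x₀ z) • y‖ := by
        rw [hrw]; exact norm_sub_le _ _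
      have h2 : ‖(1 - x₀ z) • y‖ = |1 - x₀ z| := by
        rw [norm_smul, Real.norm_eq_abs, hyn, mul_one]
      rw [h2, abs_of_nonneg (by linarith)] at this
      linarith
    have hzy0 : z + y ≠ 0 := by
      intro hcon
      rw [hcon, norm_zero] at hzy
      linarith
    obtain ⟨g, hg1, hg2⟩ := exists_dual_vector ℝ (z + y) (norm_ne_zero_iff.mpr hzy0)
    have hgbd : ∀ w : X, g w ≤ ‖w‖ := by
      intro w
      calc g w ≤ |g w| := le_abs_self _
      _ ≤ ‖g‖ * ‖w‖ := g.le_opNorm w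
      _ = ‖w‖ := by rw [hg1, one_mul]
    have hgsum : 2 - 2 * δ < g z + g y := by
      have : g (z + y) = g z + g y := map_add g z y
      rw [← this, hg2]
      exact_mod_cast hzy
    have hgz : g z ≤ 1 := le_trans (hgbd z) hz1
    have hgy1 : g y ≤ 1 := by
      have := hgbd y; rw [hyn] at this; exact this
    have hgy : 1 - 2 * δ < g y := by linarith
    have hgz2 : 1 - 2 * δ < g z := by linarith
    -- the new functional
    set F : X →L[ℝ] ℝ := x₀ + g with hF_def
    have hFz : 2 - 3 * δ < F z := by
      rw [hF_def]
      simp only [ContinuousLinearMap.add_apply]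
      linarith
    have hFnlb : 2 - 3 * δ < ‖F‖ := by
      calc 2 - 3 * δ < F z := hFz
      _ ≤ |F z| := le_abs_self _
      _ ≤ ‖F‖ * ‖z‖ := F.le_opNorm z
      _ ≤ ‖F‖ * 1 := mul_le_mul_of_nonneg_left hz1 (norm_nonneg _)
      _ = ‖F‖ := mul_one _
    have hF0 : 0 < ‖F‖ := by linarith
    refine ⟨‖F‖⁻¹ • F, δ / ‖F‖, ?_, div_pos hδ hF0, ?_, ?_⟩
    · rw [norm_smul ‖F‖⁻¹ F, norm_inv, norm_norm, inv_mul_cancel₀ hF0.ne']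
    all_goals {
      have key : ∀ x ∈ Slice (‖F‖⁻¹ • F) (δ / ‖F‖),
          ‖x‖ ≤ 1 ∧ 1 - 4 * δ < x₀ x ∧ 1 - 4 * δ < g x := by
        intro x hx
        obtain ⟨hxn, hxs⟩ := hx
        have hFx : ‖F‖ - δ < F x := by
          have h1 : (‖F‖⁻¹ • F) x = ‖F‖⁻¹ * F x := by
            simp [smul_eq_mul]
          rw [h1] at hxs
          have h2 : (1 - δ / ‖F‖) * ‖F‖ < ‖F‖⁻¹ * F x * ‖F‖ :=
            mul_lt_mul_of_pos_right hxs hF0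
          rw [sub_mul, one_mul, div_mul_cancel₀ _ hF0.ne'] at h2
          calc ‖F‖ - δ < ‖F‖⁻¹ * F x * ‖F‖ := h2
          _ = F x := by field_simp
        have hFx2 : 2 - 4 * δ < F x := by
          have : F z ≤ ‖F‖ := by
            calc F z ≤ |F z| := le_abs_self _
            _ ≤ ‖F‖ * ‖z‖ := F.le_opNorm z
            _ ≤ ‖F‖ := by nlinarith [norm_nonneg F]
          linarith
        have hFsplit : F x = x₀ x + g x := by
          rw [hF_def]; simp [ContinuousLinearMap.add_apply]
        have hx₀x : x₀ x ≤ 1 := by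
          calc x₀ x ≤ |x₀ x| := le_abs_self _
          _ ≤ ‖x₀‖ * ‖x‖ := x₀.le_opNorm x
          _ ≤ 1 := by rw [hx₀, one_mul]; exact hxn
        have hgx : g x ≤ 1 := le_trans (hgbd x) hxn
        refine ⟨hxn, by linarith, by linarith⟩
      first
      | · intro x hx
          obtain ⟨h1, h2, _⟩ := key x hx
          exact ⟨h1, by linarith⟩
      | · intro x hx lam h0 h1
          obtain ⟨hxn, _, hgx⟩ := key x hx
          have hglow : lam * (1 - 4 * δ) + r * (1 - 2 * δ) ≤ ‖lam • x + y₀‖ := by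
            calc lam * (1 - 4 * δ) + r * (1 - 2 * δ)
                ≤ lam * g x + r * g y := by nlinarith
            _ = g (lam • x + y₀) := by
                have h1 : g (lam • x) = lam * g x := map_smul g lam x
                have h2 : g y₀ = r * g y := by
                  conv_lhs => rw [hy₀]
                  exact map_smul g r y
                rw [map_add, h1, h2]
            _ ≤ ‖lam • x + y₀‖ := hgbd _
          nlinarith
    }
end

section
/- If a Banach space X contains a subspace isomorphic to c₀, then X admits an equivalent norm in which X has the strong diameter 2 property. -/
open Metric Set
open scoped ENNReal

section SD2PAux
open Filter

noncomputable def eC0 (N : ℕ) : ZeroAtInftyContinuousMap ℕ ℝ where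
  toFun := fun m => if m = N then 1 else 0
  continuous_toFun := continuous_of_discreteTopology
  zero_at_infty' := by
    rw [cocompact_eq_atTop (α := ℕ)]
    have h : (fun m => if m = N then (1:ℝ) else 0) =ᶠ[atTop] (fun _ => (0:ℝ)) := by
      filter_upwards [eventually_gt_atTop N] with m hm
      have : m ≠ N := by omega
      simp [this]
    exact Tendsto.congr' h.symm tendsto_const_nhds

@[simp] lemma eC0_apply (N m : ℕ) : eC0 N m = if m = N then 1 else 0 := rfl

lemma eval_le_normC0 (u : ZeroAtInftyContinuousMap ℕ ℝ) (n : ℕ) : |u n| ≤ ‖u‖ := by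
  rw [← ZeroAtInftyContinuousMap.norm_toBCF_eq_norm]
  exact u.toBCF.norm_coe_le_norm n

lemma normC0_le (u : ZeroAtInftyContinuousMap ℕ ℝ) {C : ℝ} (hC : 0 ≤ C)
    (h : ∀ n, |u n| ≤ C) : ‖u‖ ≤ C := by
  rw [← ZeroAtInftyContinuousMap.norm_toBCF_eq_norm]
  exact (BoundedContinuousFunction.norm_le hC).2 h

lemma normC0_eq_iSup (u : ZeroAtInftyContinuousMap ℕ ℝ) : ‖u‖ = ⨆ n, |u n| := by
  rw [← ZeroAtInftyContinuousMap.norm_toBCF_eq_norm,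
    BoundedContinuousFunction.norm_eq_iSup_norm]
  rfl

lemma sum_C0_apply {s : Finset ℕ} (g : ℕ → ZeroAtInftyContinuousMap ℕ ℝ) (m : ℕ) :
    (∑ n ∈ s, g n) m = ∑ n ∈ s, g n m := by
  classical
  induction s using Finset.cons_induction with
  | empty => rfl
  | cons a s ha ih =>
      rw [Finset.sum_cons, Finset.sum_cons, ← ih]
      rfl

lemma tendsto_eval_eC0_zero (φ : ZeroAtInftyContinuousMap ℕ ℝ →L[ℝ] ℝ) :
    Tendsto (fun N => φ (eC0 N)) atTop (nhds 0) := by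
  have key : ∀ k : ℕ, ∑ n ∈ Finset.range k, |φ (eC0 n)| ≤ ‖φ‖ := by
    intro k
    set y : ZeroAtInftyContinuousMap ℕ ℝ :=
      ∑ n ∈ Finset.range k, (if φ (eC0 n) < 0 then (-1:ℝ) else 1) • eC0 n with hy
    have hyn : ‖y‖ ≤ 1 := by
      apply normC0_le _ zero_le_one
      intro m
      rw [hy, sum_C0_apply (fun n => (if φ (eC0 n) < 0 then (-1:ℝ) else 1) • eC0 n) m]
      have hterm : ∀ n, ((if φ (eC0 n) < 0 then (-1:ℝ) else 1) • eC0 n) m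
          = if m = n then (if φ (eC0 n) < 0 then (-1:ℝ) else 1) else 0 := by
        intro n
        show (if φ (eC0 n) < 0 then (-1:ℝ) else 1) * (eC0 n m) = _
        simp [eC0_apply, mul_ite]
      rw [Finset.sum_congr rfl fun n _ => hterm n, Finset.sum_ite_eq]
      split
      · split <;> simp
      · simp
    have hφy : φ y = ∑ n ∈ Finset.range k, |φ (eC0 n)| := by
      rw [hy, map_sum]
      refine Finset.sum_congr rfl fun n _ => ?_
      rw [map_smul]
      rcases lt_or_ge (φ (eC0 n)) 0 with h | h
      · simp [h, abs_of_neg h]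
      · simp [not_lt.2 h, abs_of_nonneg h]
    calc ∑ n ∈ Finset.range k, |φ (eC0 n)| = φ y := hφy.symm
      _ ≤ |φ y| := le_abs_self _
      _ ≤ ‖φ‖ * ‖y‖ := φ.le_opNorm y
      _ ≤ ‖φ‖ * 1 := mul_le_mul_of_nonneg_left hyn (norm_nonneg φ)
      _ = ‖φ‖ := mul_one _
  have hsum : Summable fun n => |φ (eC0 n)| :=
    summable_of_sum_range_le (fun n => abs_nonneg _) key
  exact (summable_abs_iff.mp hsum).tendsto_atTop_zero


lemma exists_dual_seq {X : Type*} [NormedAddCommGroup X] [NormedSpace ℝ X]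
    (T : (ZeroAtInftyContinuousMap ℕ ℝ) →L[ℝ] X) (c : ℝ) (hc : 0 < c)
    (hT : ∀ y, c * ‖y‖ ≤ ‖T y‖) :
    ∃ f : ℕ → X →L[ℝ] ℝ, (∀ n u, f n (T u) = u n) ∧ (∀ n, ‖f n‖ ≤ 1 / c) := by
  set Tl := (T : (ZeroAtInftyContinuousMap ℕ ℝ) →ₗ[ℝ] X) with hTl
  have hinj : Function.Injective Tl := by
    intro u v huv
    have h1 := hT (u - v)
    rw [map_sub, show T u = Tl u from rfl, show T v = Tl v from rfl, huv,
      sub_self, norm_zero] at h1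
    have h3 : ‖u - v‖ ≤ 0 := by nlinarith [norm_nonneg (u - v)]
    exact sub_eq_zero.mp (norm_le_zero_iff.mp h3)
  set E := LinearEquiv.ofInjective Tl hinj with hE
  have hEapp : ∀ u, (E u : X) = T u := fun u => LinearEquiv.ofInjective_apply Tl u
  have hub : ∀ u : ZeroAtInftyContinuousMap ℕ ℝ, ‖u‖ ≤ (1/c) * ‖T u‖ := by
    intro u
    rw [div_mul_eq_mul_div, le_div_iff₀ hc]
    nlinarith [hT u]
  have evadd : ∀ (n :ℕ) (u v : ZeroAtInftyContinuousMap ℕ ℝ), (u + v) n = u n + v n :=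
    fun _ _ _ => rfl
  let ev : ℕ → (ZeroAtInftyContinuousMap ℕ ℝ) →ₗ[ℝ] ℝ := fun n =>
    { toFun := fun u => u n, map_add' := fun u v => rfl, map_smul' := fun r u => rfl }
  let gl : ℕ → (LinearMap.range Tl) →ₗ[ℝ] ℝ := fun n => (ev n) ∘ₗ E.symm.toLinearMap
  have hbound : ∀ n (z : LinearMap.range Tl), ‖gl n z‖ ≤ (1/c) * ‖z‖ := by
    intro n z
    have h1 : (z : X) = T (E.symm z) := by
      rw [← hEapp (E.symm z), E.apply_symm_apply]
    have h2 : ‖(E.symm z : ZeroAtInftyContinuousMap ℕ ℝ)‖ ≤ (1/c) * ‖z‖ := by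
      calc ‖(E.symm z : ZeroAtInftyContinuousMap ℕ ℝ)‖ ≤ (1/c) * ‖T (E.symm z)‖ := hub _
        _ = (1/c) * ‖z‖ := by rw [← h1]; rfl
    calc ‖gl n z‖ = |(E.symm z : ZeroAtInftyContinuousMap ℕ ℝ) n| := rfl
      _ ≤ ‖(E.symm z : ZeroAtInftyContinuousMap ℕ ℝ)‖ := eval_le_normC0 _ n
      _ ≤ (1/c) * ‖z‖ := h2
  let gc : ℕ → (LinearMap.range Tl) →L[ℝ] ℝ := fun n => (gl n).mkContinuous (1/c) (hbound n)
  have hc' : (0:ℝ) ≤ 1/c := by positivity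
  refine ⟨fun n => (exists_extension_norm_eq (LinearMap.range Tl) (gc n)).choose,
    fun n u => ?_, fun n => ?_⟩
  · obtain ⟨h1, h2⟩ := (exists_extension_norm_eq (LinearMap.range Tl) (gc n)).choose_spec
    have hz : T u = ((E u : LinearMap.range Tl) : X) := (hEapp u).symm
    rw [hz, h1 (E u)]
    show gl n (E u) = u n
    show ev n (E.symm (E u)) = u n
    rw [E.symm_apply_apply]
    rfl
  · obtain ⟨h1, h2⟩ := (exists_extension_norm_eq (LinearMap.range Tl) (gc n)).choose_spec
    rw [h2]
    exact LinearMap.mkContinuous_norm_le _ hc' _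
end SD2PAux

/-- If a Banach space `X` contains a subspace isomorphic to `c₀`, then `X` admits an
equivalent norm `nn` in which `X` has the strong diameter 2 property.  The strong diameter 2
property for the new norm is expressed directly: for any convex combination of slices of the
`nn`-unit ball given by functionals of `nn`-norm one, the set of mutual `nn`-distances has
least upper bound `2`. -/
theorem stmt_16 (X : Type*) [NormedAddCommGroup X] [NormedSpace ℝ X] [CompleteSpace X]
    (h : ∃ (T : (ZeroAtInftyContinuousMap ℕ ℝ) →L[ℝ] X) (c : ℝ), 0 < c ∧
      ∀ y : ZeroAtInftyContinuousMap ℕ ℝ, c * ‖y‖ ≤ ‖T y‖) :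
    ∃ nn : X → ℝ,
      (∀ x : X, nn x = 0 ↔ x = 0) ∧
      (∀ x y : X, nn (x + y) ≤ nn x + nn y) ∧
      (∀ (r : ℝ) (x : X), nn (r • x) = |r| * nn x) ∧
      (∃ C₁ : ℝ, 0 < C₁ ∧ ∃ C₂ : ℝ, 0 < C₂ ∧
        ∀ x : X, nn x ≤ C₁ * ‖x‖ ∧ ‖x‖ ≤ C₂ * nn x) ∧
      (∀ (n : ℕ) (lam : Fin n → ℝ) (f : Fin n → X →L[ℝ] ℝ) (ε : Fin n → ℝ),
        (∀ i, 0 ≤ lam i) → ∑ i, lam i = 1 →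
        (∀ i, IsLUB {t : ℝ | ∃ x : X, nn x ≤ 1 ∧ t = f i x} 1) →
        (∀ i, 0 < ε i) →
        IsLUB {t : ℝ | ∃ u v : X,
          u ∈ {z : X | ∃ g : Fin n → X,
            (∀ i, nn (g i) ≤ 1 ∧ 1 - ε i < f i (g i)) ∧ z = ∑ i, lam i • g i} ∧
          v ∈ {z : X | ∃ g : Fin n → X,
            (∀ i, nn (g i) ≤ 1 ∧ 1 - ε i < f i (g i)) ∧ z = ∑ i, lam i • g i} ∧
          t = nn (u - v)} 2) := by
  classical
  obtain ⟨T, c, hc, hT⟩ := h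
  obtain ⟨f, hfT, hfn⟩ := exists_dual_seq T c hc hT
  have hc' : (0:ℝ) ≤ 1 / c := by positivity
  -- the range of T as a set
  set S : Set X := Set.range ⇑T with hSdef
  have hS0 : (0:X) ∈ S := ⟨0, map_zero T⟩
  have hSne : S.Nonempty := ⟨0, hS0⟩
  have hSadd : ∀ a b : X, a ∈ S → b ∈ S → a + b ∈ S := by
    rintro _ _ ⟨u, rfl⟩ ⟨v, rfl⟩; exact ⟨u + v, map_add T u v⟩
  have hSsmul : ∀ (r : ℝ) (a : X), a ∈ S → r • a ∈ S := by
    rintro r _ ⟨u, rfl⟩; exact ⟨r • u, map_smul T r u⟩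
  set q : X → ℝ := fun x => infDist x S with hqdef
  set p : X → ℝ := fun x => ⨆ n, |f n x| with hpdef
  set nn : X → ℝ := fun x => max (q x) (p x) with hnndef
  -- basic facts about p
  have hbdd : ∀ x : X, BddAbove (Set.range fun n => |f n x|) := by
    intro x
    refine ⟨(1/c) * ‖x‖, ?_⟩
    rintro t ⟨n, rfl⟩
    calc |f n x| = ‖f n x‖ := (Real.norm_eq_abs _).symm
      _ ≤ ‖f n‖ * ‖x‖ := (f n).le_opNorm x
      _ ≤ (1/c) * ‖x‖ := mul_le_mul_of_nonneg_right (hfn n) (norm_nonneg x)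
  have hple : ∀ x : X, p x ≤ (1/c) * ‖x‖ := by
    intro x
    refine ciSup_le fun n => ?_
    calc |f n x| = ‖f n x‖ := (Real.norm_eq_abs _).symm
      _ ≤ ‖f n‖ * ‖x‖ := (f n).le_opNorm x
      _ ≤ (1/c) * ‖x‖ := mul_le_mul_of_nonneg_right (hfn n) (norm_nonneg x)
  have hpabs : ∀ (x : X) (n : ℕ), |f n x| ≤ p x := fun x n => le_ciSup (hbdd x) n
  have hp0 : ∀ x : X, 0 ≤ p x := fun x => (abs_nonneg _).trans (hpabs x 0)
  have hpadd : ∀ x y : X, p (x + y) ≤ p x + p y := by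
    intro x y
    refine ciSup_le fun n => ?_
    rw [map_add]
    exact (abs_add_le _ _).trans (add_le_add (hpabs x n) (hpabs y n))
  have hpsmul : ∀ (r : ℝ) (x : X), p (r • x) = |r| * p x := by
    intro r x
    have h1 : ∀ n, |f n (r • x)| = |r| * |f n x| := by
      intro n; rw [map_smul, smul_eq_mul, abs_mul]
    calc p (r • x) = ⨆ n, |r| * |f n x| := by
          rw [hpdef]; exact iSup_congr h1
      _ = |r| * p x := (Real.mul_iSup_of_nonneg (abs_nonneg r) _).symm
  have hpzero : p 0 = 0 := by
    have : ∀ n : ℕ, |f n (0:X)| = 0 := by intro n; rw [map_zero, abs_zero]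
    rw [hpdef]
    simp only [map_zero, abs_zero]
    exact ciSup_const
  have hpT : ∀ u : ZeroAtInftyContinuousMap ℕ ℝ, p (T u) = ‖u‖ := by
    intro u
    rw [normC0_eq_iSup, hpdef]
    exact iSup_congr fun n => by rw [hfT n u]
  -- basic facts about q
  have hqle : ∀ x : X, q x ≤ ‖x‖ := by
    intro x
    have := infDist_le_dist_of_mem hS0 (x := x)
    rwa [dist_zero_right] at this
  have hq0 : ∀ x : X, 0 ≤ q x := fun x => infDist_nonneg
  have hqzero : q 0 = 0 := infDist_zero_of_mem hS0
  have hqexists : ∀ (x : X) (ε : ℝ), 0 < ε → ∃ a ∈ S, dist x a < q x + ε := by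
    intro x ε hε
    exact (infDist_lt_iff hSne).1 (lt_add_of_pos_right _ hε)
  have hqadd : ∀ x y : X, q (x + y) ≤ q x + q y := by
    intro x y
    refine le_of_forall_pos_le_add fun ε hε => ?_
    obtain ⟨a, haS, ha⟩ := hqexists x (ε/2) (by linarith)
    obtain ⟨b, hbS, hb⟩ := hqexists y (ε/2) (by linarith)
    calc q (x + y) ≤ dist (x + y) (a + b) := infDist_le_dist_of_mem (hSadd a b haS hbS)
      _ ≤ dist x a + dist y b := dist_add_add_le _ _ _ _
      _ ≤ q x + q y + ε := by linarith
  have hqsmul_le : ∀ (r : ℝ) (x : X), q (r • x) ≤ |r| * q x := by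
    intro r x
    rcases eq_or_ne r 0 with rfl | hr
    · rw [zero_smul, hqzero, abs_zero, zero_mul]
    · refine le_of_forall_pos_le_add fun ε hε => ?_
      have hrpos : 0 < |r| := abs_pos.2 hr
      obtain ⟨a, haS, ha⟩ := hqexists x (ε/|r|) (by positivity)
      calc q (r • x) ≤ dist (r • x) (r • a) := infDist_le_dist_of_mem (hSsmul r a haS)
        _ = |r| * dist x a := by rw [dist_smul₀, Real.norm_eq_abs]
        _ ≤ |r| * (q x + ε/|r|) := mul_le_mul_of_nonneg_left ha.le (abs_nonneg r)
        _ = |r| * q x + ε := by field_simp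
  have hqsmul : ∀ (r : ℝ) (x : X), q (r • x) = |r| * q x := by
    intro r x
    rcases eq_or_ne r 0 with rfl | hr
    · rw [zero_smul, hqzero, abs_zero, zero_mul]
    · refine le_antisymm (hqsmul_le r x) ?_
      have h2 := hqsmul_le r⁻¹ (r • x)
      rw [inv_smul_smul₀ hr] at h2
      have h3 : |r| * q x ≤ |r| * (|r⁻¹| * q (r • x)) :=
        mul_le_mul_of_nonneg_left h2 (abs_nonneg r)
      rwa [abs_inv, ← mul_assoc, mul_inv_cancel₀ (abs_ne_zero.2 hr), one_mul] at h3
  -- p dominates the norm on the closure of S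
  have hplip : ∀ x y : X, p x ≤ p y + (1/c) * ‖x - y‖ := by
    intro x y
    have hxy : y + (x - y) = x := by abel
    calc p x = p (y + (x - y)) := by rw [hxy]
      _ ≤ p y + p (x - y) := hpadd _ _
      _ ≤ p y + (1/c) * ‖x - y‖ := add_le_add le_rfl (hple _)
  have hpcont : Continuous p := by
    refine (LipschitzWith.of_dist_le_mul (K := Real.toNNReal (1/c)) fun x y => ?_).continuous
    rw [Real.dist_eq, Real.coe_toNNReal _ hc', dist_eq_norm]
    refine abs_sub_le_iff.2 ⟨?_, ?_⟩
    · have := hplip x y; linarith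
    · have := hplip y x; rw [norm_sub_rev] at this; linarith
  have hclos : ∀ x ∈ closure S, ‖x‖ ≤ ‖T‖ * p x := by
    intro x hx
    have hsub : S ⊆ {z : X | ‖z‖ ≤ ‖T‖ * p z} := by
      rintro _ ⟨u, rfl⟩
      rw [Set.mem_setOf_eq, hpT]
      exact T.le_opNorm u
    exact closure_minimal hsub (isClosed_le continuous_norm (continuous_const.mul hpcont)) hx
  -- basic facts about nn
  have hnq : ∀ x : X, q x ≤ nn x := fun x => le_max_left _ _
  have hnp : ∀ x : X, p x ≤ nn x := fun x => le_max_right _ _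
  have hnn0 : nn 0 = 0 := by rw [hnndef]; simp only [hqzero, hpzero, max_self]
  have hnntri : ∀ x y : X, nn (x + y) ≤ nn x + nn y := by
    intro x y
    refine max_le ?_ ?_
    · exact (hqadd x y).trans (add_le_add (hnq x) (hnq y))
    · exact (hpadd x y).trans (add_le_add (hnp x) (hnp y))
  have hnnsmul : ∀ (r : ℝ) (x : X), nn (r • x) = |r| * nn x := by
    intro r x
    show max (q (r • x)) (p (r • x)) = |r| * max (q x) (p x)
    rw [hqsmul, hpsmul, mul_max_of_nonneg _ _ (abs_nonneg r)]
  have hnn_eq_zero : ∀ x : X, nn x = 0 ↔ x = 0 := by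
    intro x
    constructor
    · intro hx
      have hqx : q x = 0 := le_antisymm (by rw [← hx]; exact hnq x) (hq0 x)
      have hpx : p x = 0 := le_antisymm (by rw [← hx]; exact hnp x) (hp0 x)
      have hxc : x ∈ closure S := (mem_closure_iff_infDist_zero hSne).2 hqx
      have := hclos x hxc
      rw [hpx, mul_zero] at this
      exact norm_le_zero_iff.1 this
    · rintro rfl; exact hnn0
  have hnn_nonneg : ∀ x : X, 0 ≤ nn x := fun x => (hq0 x).trans (hnq x)
  refine ⟨nn, hnn_eq_zero, hnntri, hnnsmul, ?_, ?_⟩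
  · -- equivalence of norms
    refine ⟨1 + 1/c, by positivity, 1 + ‖T‖ + ‖T‖ * (1/c), by positivity, fun x => ⟨?_, ?_⟩⟩
    · refine max_le ?_ ?_
      · nlinarith [hqle x, norm_nonneg x]
      · nlinarith [hple x, norm_nonneg x]
    · refine le_of_forall_pos_le_add fun ε' hε' => ?_
      have hden : (0:ℝ) < 1 + ‖T‖ * (1/c) := by positivity
      obtain ⟨a, haS, ha⟩ := hqexists x (ε' / (1 + ‖T‖ * (1/c))) (by positivity)
      have haC : ‖a‖ ≤ ‖T‖ * p a := hclos a (subset_closure haS)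
      have hpa : p a ≤ p x + (1/c) * ‖a - x‖ := hplip a x
      have hax : ‖a - x‖ = dist x a := by rw [← dist_eq_norm, dist_comm]
      have hxa : ‖x - a‖ = dist x a := by rw [← dist_eq_norm]
      have h1 : ‖x‖ ≤ ‖x - a‖ + ‖a‖ := by
        calc ‖x‖ = ‖(x - a) + a‖ := by rw [sub_add_cancel]
          _ ≤ ‖x - a‖ + ‖a‖ := norm_add_le _ _
      have hq' : q x ≤ nn x := hnq x
      have hp' : p x ≤ nn x := hnp x
      have hεeq : ε' / (1 + ‖T‖ * (1/c)) * (1 + ‖T‖ * (1/c)) = ε' := by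
        field_simp
      nlinarith [norm_nonneg T, hq0 x, hp0 x, ha, mul_le_mul_of_nonneg_left hpa (norm_nonneg T),
        mul_le_mul_of_nonneg_left ha.le (mul_nonneg (norm_nonneg T) hc')]
  · -- the strong diameter 2 property
    intro n lam F ε hlam hsum hflub hε
    -- the combined slice set
    set A : Set X := {z : X | ∃ g : Fin n → X,
      (∀ i, nn (g i) ≤ 1 ∧ 1 - ε i < F i (g i)) ∧ z = ∑ i, lam i • g i} with hAdef
    -- upper bound: all distances are at most 2
    have hsumle : ∀ (s : Finset (Fin n)) (g : Fin n → X),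
        nn (∑ i ∈ s, g i) ≤ ∑ i ∈ s, nn (g i) := by
      intro s
      induction s using Finset.cons_induction with
      | empty => intro g; simpa using le_of_eq hnn0
      | cons a s ha ih =>
          intro g
          rw [Finset.sum_cons, Finset.sum_cons]
          exact (hnntri _ _).trans (add_le_add le_rfl (ih g))
    have hA1 : ∀ z ∈ A, nn z ≤ 1 := by
      rintro _ ⟨g, hg, rfl⟩
      calc nn (∑ i, lam i • g i) ≤ ∑ i, nn (lam i • g i) := hsumle _ _
        _ = ∑ i, lam i * nn (g i) := by
            refine Finset.sum_congr rfl fun i _ => ?_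
            rw [hnnsmul, abs_of_nonneg (hlam i)]
        _ ≤ ∑ i, lam i * 1 := Finset.sum_le_sum fun i _ =>
            mul_le_mul_of_nonneg_left (hg i).1 (hlam i)
        _ = 1 := by simp [hsum]
    have hub : (2:ℝ) ∈ upperBounds {t : ℝ | ∃ u v : X, u ∈ A ∧ v ∈ A ∧ t = nn (u - v)} := by
      rintro t ⟨u, v, hu, hv, rfl⟩
      have hnv : nn (-v) = nn v := by
        rw [← neg_one_smul ℝ v, hnnsmul]; norm_num
      calc nn (u - v) = nn (u + -v) := by rw [sub_eq_add_neg]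
        _ ≤ nn u + nn (-v) := hnntri _ _
        _ = nn u + nn v := by rw [hnv]
        _ ≤ 1 + 1 := add_le_add (hA1 u hu) (hA1 v hv)
        _ = 2 := by norm_num
    -- pick slice points
    have hpick : ∀ i, ∃ x : X, nn x ≤ 1 ∧ 1 - ε i / 2 < F i x := by
      intro i
      obtain ⟨t, ht, hlt, -⟩ := (hflub i).exists_between (show 1 - ε i / 2 < 1 by linarith [hε i])
      obtain ⟨x, hx, rfl⟩ := ht
      exact ⟨x, hx, hlt⟩
    choose x hx1 hx2 using hpick
    -- choose N with all |F i (T (eC0 N))| small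
    have hev : ∀ᶠ N in Filter.atTop, ∀ i, |F i (T (eC0 N))| < ε i / 4 := by
      rw [Filter.eventually_all]
      intro i
      have htd := tendsto_eval_eC0_zero ((F i).comp T)
      have hball := htd (Metric.ball_mem_nhds (0:ℝ) (by linarith [hε i] : (0:ℝ) < ε i / 4))
      filter_upwards [hball] with N hN
      simpa [Real.dist_eq] using hN
    obtain ⟨N, hN⟩ := hev.exists
    set w : X := T (eC0 N) with hwdef
    have hfw : ∀ m, f m w = if m = N then 1 else 0 := by
      intro m; rw [hwdef, hfT m (eC0 N)]; simp
    have hwS : w ∈ S := ⟨eC0 N, rfl⟩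
    have hqw : q w = 0 := infDist_zero_of_mem hwS
    have hpw : p w = 1 := by
      refine le_antisymm (ciSup_le fun m => ?_) ?_
      · rw [hfw m]; split <;> simp
      · have h1 := hpabs w N
        rw [hfw N] at h1
        simpa using h1
    have hnnw : nn w = 1 := by
      show max (q w) (p w) = 1
      rw [hqw, hpw]; exact max_eq_right zero_le_one
    -- the key perturbation estimate
    have hkey : ∀ (i : Fin n) (σ : ℝ), |σ| = 1 →
        nn ((x i - f N (x i) • w) + σ • w) ≤ 1 ∧
        1 - ε i < F i ((x i - f N (x i) • w) + σ • w) := by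
      intro i σ hσ
      have hxq : q (x i) ≤ 1 := (hnq (x i)).trans (hx1 i)
      have hxp : p (x i) ≤ 1 := (hnp (x i)).trans (hx1 i)
      have hfNx : |f N (x i)| ≤ 1 := (hpabs (x i) N).trans hxp
      constructor
      · refine max_le ?_ ?_
        · have hrw : (x i - f N (x i) • w) + σ • w = x i + (σ - f N (x i)) • w := by
            module
          rw [hrw]
          calc q (x i + (σ - f N (x i)) • w)
              ≤ q (x i) + q ((σ - f N (x i)) • w) := hqadd _ _
            _ = q (x i) + |σ - f N (x i)| * q w := by rw [hqsmul]
            _ = q (x i) := by rw [hqw, mul_zero, add_zero]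
            _ ≤ 1 := hxq
        · refine ciSup_le fun m => ?_
          have hval : f m ((x i - f N (x i) • w) + σ • w)
              = f m (x i) - f N (x i) * f m w + σ * f m w := by
            rw [map_add, map_sub, map_smul, map_smul, smul_eq_mul, smul_eq_mul]
          rw [hval, hfw m]
          rcases eq_or_ne m N with rfl | hm
          · have h9 : ((f m (x i) - f m (x i) * if m = m then (1:ℝ) else 0)
                + σ * if m = m then (1:ℝ) else 0) = σ := by
              rw [if_pos rfl]; ring
            rw [h9, hσ]
          · rw [if_neg hm]
            have h9 : f m (x i) - f N (x i) * 0 + σ * 0 = f m (x i) := by ring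
            rw [h9]
            exact (hpabs (x i) m).trans hxp
      · have hval : F i ((x i - f N (x i) • w) + σ • w)
            = F i (x i) - f N (x i) * F i w + σ * F i w := by
          rw [map_add, map_sub, map_smul, map_smul, smul_eq_mul, smul_eq_mul]
        rw [hval]
        have hFw : |F i w| < ε i / 4 := hN i
        have e1 : f N (x i) * F i w ≤ |F i w| := by
          calc f N (x i) * F i w ≤ |f N (x i) * F i w| := le_abs_self _
            _ = |f N (x i)| * |F i w| := abs_mul _ _
            _ ≤ |F i w| := mul_le_of_le_one_left (abs_nonneg _) hfNx
        have e2 : -|F i w| ≤ σ * F i w := by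
          have : |σ * F i w| = |F i w| := by rw [abs_mul, hσ, one_mul]
          calc -|F i w| = -|σ * F i w| := by rw [this]
            _ ≤ σ * F i w := neg_abs_le _
        have e3 := hx2 i
        linarith
    -- the two witness points
    set g₁ : Fin n → X := fun i => (x i - f N (x i) • w) + (1:ℝ) • w with hg₁
    set g₂ : Fin n → X := fun i => (x i - f N (x i) • w) + (-1:ℝ) • w with hg₂
    have hg₁mem : ∀ i, nn (g₁ i) ≤ 1 ∧ 1 - ε i < F i (g₁ i) := fun i =>
      hkey i 1 (by norm_num)
    have hg₂mem : ∀ i, nn (g₂ i) ≤ 1 ∧ 1 - ε i < F i (g₂ i) := fun i =>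
      hkey i (-1) (by norm_num)
    have hdiff : ∀ i, g₁ i - g₂ i = (2:ℝ) • w := by
      intro i
      show ((x i - f N (x i) • w) + (1:ℝ) • w) - ((x i - f N (x i) • w) + (-1:ℝ) • w) = (2:ℝ) • w
      module
    have huv : (∑ i, lam i • g₁ i) - (∑ i, lam i • g₂ i) = (2:ℝ) • w := by
      rw [← Finset.sum_sub_distrib]
      calc (∑ i, (lam i • g₁ i - lam i • g₂ i))
          = ∑ i, lam i • ((2:ℝ) • w) := by
            refine Finset.sum_congr rfl fun i _ => ?_
            rw [← smul_sub, hdiff i]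
        _ = (∑ i, lam i) • ((2:ℝ) • w) := (Finset.sum_smul).symm
        _ = (2:ℝ) • w := by rw [hsum, one_smul]
    have h2mem : (2:ℝ) ∈ {t : ℝ | ∃ u v : X, u ∈ A ∧ v ∈ A ∧ t = nn (u - v)} := by
      refine ⟨∑ i, lam i • g₁ i, ∑ i, lam i • g₂ i, ⟨g₁, hg₁mem, rfl⟩, ⟨g₂, hg₂mem, rfl⟩, ?_⟩
      rw [huv, hnnsmul, hnnw]
      norm_num
    exact ⟨hub, fun b hb => hb h2mem⟩
end

section
/- Let Y be a proper closed subspace of a Banach space X that is an M-ideal in X, i.e., X* = Z ⊕₁ Y^⊥ as an ℓ₁-sum for some closed subspace Z of X*. If Z is 1-norming for X, then X has the strong diameter 2 property. -/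
open Metric Set
open scoped ENNReal

private lemma aux_norming {X : Type*} [NormedAddCommGroup X] [NormedSpace ℝ X]
    (g : X →L[ℝ] ℝ) {c : ℝ} (hc : 0 < c) : ∃ x : X, ‖x‖ ≤ 1 ∧ ‖g‖ - c < g x := by
  obtain ⟨x, hx1, hx2⟩ := g.exists_lt_apply_of_lt_opNorm (r := ‖g‖ - c) (by linarith)
  rcases lt_abs.1 (by simpa [Real.norm_eq_abs] using hx2) with h | h
  · exact ⟨x, hx1.le, h⟩
  · exact ⟨-x, by simpa using hx1.le, by rw [map_neg]; linarith⟩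

private lemma aux_apply_le {X : Type*} [NormedAddCommGroup X] [NormedSpace ℝ X]
    (g : X →L[ℝ] ℝ) (x : X) (hg : ‖g‖ ≤ 1) (hx : ‖x‖ ≤ 1) : g x ≤ 1 := by
  calc g x ≤ |g x| := le_abs_self _
    _ = ‖g x‖ := (Real.norm_eq_abs _).symm
    _ ≤ ‖g‖ * ‖x‖ := g.le_opNorm x
    _ ≤ 1 * 1 := by
        exact mul_le_mul hg hx (norm_nonneg _) (by linarith [norm_nonneg g])
    _ = 1 := one_mul 1

private lemma aux_L1 {X : Type*} [NormedAddCommGroup X] [NormedSpace ℝ X]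
    (Y : Subspace ℝ X) (Z : Subspace ℝ (X →L[ℝ] ℝ))
    (hdecomp : ∀ f : X →L[ℝ] ℝ, ∃! p : (X →L[ℝ] ℝ) × (X →L[ℝ] ℝ),
        p.1 ∈ Z ∧ (∀ y ∈ Y, p.2 y = 0) ∧ f = p.1 + p.2 ∧ ‖f‖ = ‖p.1‖ + ‖p.2‖)
    {z w : X →L[ℝ] ℝ} (hz : z ∈ Z) (hw : ∀ y ∈ Y, w y = 0) :
    ‖z + w‖ = ‖z‖ + ‖w‖ := by
  have hinter : ∀ g : X →L[ℝ] ℝ, g ∈ Z → (∀ y ∈ Y, g y = 0) → g = 0 := by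
    intro g hg1 hg2
    obtain ⟨q, hq, hqu⟩ := hdecomp g
    have e1 := hqu (g, 0) ⟨hg1, by simp, by simp, by simp⟩
    have e2 := hqu (0, g) ⟨Z.zero_mem, hg2, by simp, by simp⟩
    have e3 : (g, (0 : X →L[ℝ] ℝ)) = ((0 : X →L[ℝ] ℝ), g) := e1.trans e2.symm
    exact congrArg Prod.fst e3
  obtain ⟨p, ⟨hp1, hp2, hp3, hp4⟩, -⟩ := hdecomp (z + w)
  have hzp : z - p.1 = 0 := by
    refine hinter _ (Z.sub_mem hz hp1) ?_
    intro y hy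
    have h3 := congrArg (fun g : X →L[ℝ] ℝ => g y) hp3
    simp only [ContinuousLinearMap.add_apply] at h3
    have h4 := hp2 y hy
    have h5 := hw y hy
    simp only [ContinuousLinearMap.sub_apply]
    linarith
  have h1 : p.1 = z := (sub_eq_zero.mp hzp).symm
  have h2 : p.2 = w := by
    have e : z + w = z + p.2 := by rw [hp3, h1]
    exact (add_left_cancel e).symm
  rw [hp4, h1, h2]

private lemma aux_approx {X : Type*} [NormedAddCommGroup X] [NormedSpace ℝ X]
    (Z : Subspace ℝ (X →L[ℝ] ℝ))
    (hnorming : ∀ x : X, IsLUB {t : ℝ | ∃ z ∈ Z, ‖z‖ ≤ 1 ∧ t = z x} ‖x‖)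
    {ι : Type*} [Fintype ι] (x : ι → X) (ψ : X →L[ℝ] ℝ) (hψ : ‖ψ‖ ≤ 1)
    {γ : ℝ} (hγ : 0 < γ) :
    ∃ z, z ∈ Z ∧ ‖z‖ ≤ 1 ∧ ∀ j, |z (x j) - ψ (x j)| < γ := by
  classical
  let L : (X →L[ℝ] ℝ) →ₗ[ℝ] (ι → ℝ) :=
    { toFun := fun g => fun j => g (x j)
      map_add' := by intro a b; funext j; simp
      map_smul' := by intro c a; funext j; simp }
  have hLapp : ∀ (g : X →L[ℝ] ℝ) (j : ι), L g j = g (x j) := fun g j => rfl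
  set S : Set (ι → ℝ) := L '' ((Z : Set (X →L[ℝ] ℝ)) ∩ Metric.closedBall 0 1) with hS
  have hconv : Convex ℝ (closure S) :=
    ((Z.convex.inter (convex_closedBall _ _)).linear_image L).closure
  have hmem : (fun j => ψ (x j)) ∈ closure S := by
    by_contra hp
    obtain ⟨F, u, hFu, huF⟩ := geometric_hahn_banach_closed_point hconv isClosed_closure hp
    set a : ι → ℝ := fun j => F (fun k => if j = k then (1:ℝ) else 0) with ha
    have hFt : ∀ t : ι → ℝ, F t = ∑ j, t j * a j := by
      intro t
      conv_lhs => rw [pi_eq_sum_univ t]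
      rw [map_sum]
      exact Finset.sum_congr rfl fun j _ => by rw [map_smul]; simp [ha, smul_eq_mul]
    set xb : X := ∑ j, a j • x j with hxb
    have hzxb : ∀ g : X →L[ℝ] ℝ, g xb = ∑ j, g (x j) * a j := by
      intro g
      rw [hxb, map_sum]
      exact Finset.sum_congr rfl fun j _ => by rw [map_smul, smul_eq_mul, mul_comm]
    have hub : ‖xb‖ ≤ u := by
      refine (hnorming xb).2 ?_
      rintro t ⟨z, hzZ, hz1, rfl⟩
      have hmemS : L z ∈ S :=
        ⟨z, ⟨hzZ, mem_closedBall_zero_iff.2 hz1⟩, rfl⟩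
      have hlt := hFu (L z) (subset_closure hmemS)
      rw [hFt] at hlt
      have : z xb = ∑ j, L z j * a j := by
        rw [hzxb z]
        exact Finset.sum_congr rfl fun j _ => by rw [hLapp]
      linarith [this ▸ hlt]
    have hfp : F (fun j => ψ (x j)) ≤ u := by
      rw [hFt]
      have e : ∑ j, (fun j => ψ (x j)) j * a j = ψ xb := (hzxb ψ).symm
      rw [e]
      calc ψ xb ≤ |ψ xb| := le_abs_self _
        _ = ‖ψ xb‖ := (Real.norm_eq_abs _).symm
        _ ≤ ‖ψ‖ * ‖xb‖ := ψ.le_opNorm xb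
        _ ≤ 1 * ‖xb‖ := mul_le_mul_of_nonneg_right hψ (norm_nonneg _)
        _ = ‖xb‖ := one_mul _
        _ ≤ u := hub
    linarith
  obtain ⟨b, hbS, hbd⟩ := Metric.mem_closure_iff.1 hmem γ hγ
  obtain ⟨z, ⟨hzZ, hz1⟩, rfl⟩ := hbS
  refine ⟨z, hzZ, mem_closedBall_zero_iff.1 hz1, fun j => ?_⟩
  have h1 : |ψ (x j) - z (x j)| ≤ dist (fun j => ψ (x j)) (L z) := by
    have h2 := norm_le_pi_norm ((fun j => ψ (x j)) - L z) j
    simpa [dist_eq_norm, Real.norm_eq_abs, hLapp] using h2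
  rw [abs_sub_comm]
  exact lt_of_le_of_lt h1 hbd

/-- If `Y` is a proper closed subspace of `X` which is an `M`-ideal, i.e.
`X* = Z ⊕₁ Y^⊥` for a closed subspace `Z` of `X*`, and `Z` is 1-norming for `X`,
then `X` has the strong diameter 2 property. -/
theorem stmt_17 (X : Type*) [NormedAddCommGroup X] [NormedSpace ℝ X] [CompleteSpace X]
    (Y : Subspace ℝ X) (hYclosed : IsClosed (Y : Set X)) (hYproper : Y ≠ ⊤)
    (Z : Subspace ℝ (X →L[ℝ] ℝ)) (hZclosed : IsClosed (Z : Set (X →L[ℝ] ℝ)))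
    (hdecomp : ∀ f : X →L[ℝ] ℝ,
      ∃! p : (X →L[ℝ] ℝ) × (X →L[ℝ] ℝ),
        p.1 ∈ Z ∧ (∀ y ∈ Y, p.2 y = 0) ∧ f = p.1 + p.2 ∧ ‖f‖ = ‖p.1‖ + ‖p.2‖)
    (hnorming : ∀ x : X, IsLUB {t : ℝ | ∃ z ∈ Z, ‖z‖ ≤ 1 ∧ t = z x} ‖x‖) :
    StrongD2P X := by
  intro n lam f ε hlam hlam1 hf hε
  classical
  -- upper bound
  have hsub : ∀ x ∈ CombSlices lam f ε, ‖x‖ ≤ 1 := by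
    rintro x ⟨g, hg, rfl⟩
    calc ‖∑ i, lam i • g i‖ ≤ ∑ i, ‖lam i • g i‖ := norm_sum_le _ _
      _ ≤ ∑ i, lam i := Finset.sum_le_sum fun i _ => by
          rw [norm_smul, Real.norm_of_nonneg (hlam i)]
          exact mul_le_of_le_one_right (hlam i) (hg i).1
      _ = 1 := hlam1
  have hbdd : Bornology.IsBounded (CombSlices lam f ε) :=
    (Metric.isBounded_closedBall (x := (0:X)) (r := 1)).subset
      (fun x hx => by simpa [Metric.mem_closedBall, dist_zero_right] using hsub x hx)
  have hdle : Metric.diam (CombSlices lam f ε) ≤ 2 := by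
    refine Metric.diam_le_of_forall_dist_le (by norm_num) fun x hx y hy => ?_
    have h1 := hsub x hx
    have h2 := hsub y hy
    calc dist x y = ‖x - y‖ := dist_eq_norm x y
      _ ≤ ‖x‖ + ‖y‖ := norm_sub_le _ _
      _ ≤ 2 := by linarith
  rcases isEmpty_or_nonempty (Fin n) with hemp | hne
  · rw [Finset.univ_eq_empty, Finset.sum_empty] at hlam1; norm_num at hlam1
  haveI := hne
  -- ψ : norm-one functional vanishing on Y
  obtain ⟨x0, hx0⟩ : ∃ x0 : X, x0 ∉ Y := by
    by_contra h
    push_neg at h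
    exact hYproper (Submodule.eq_top_iff'.2 h)
  obtain ⟨F, u, hFu, huF⟩ := geometric_hahn_banach_closed_point Y.convex hYclosed hx0
  have hu0 : 0 < u := by
    have := hFu 0 Y.zero_mem
    simpa using this
  have hFY : ∀ y ∈ Y, F y = 0 := by
    intro y hy
    by_contra hyne
    have hmem : ((u + 1) / F y) • y ∈ Y := Y.smul_mem _ hy
    have h1 := hFu _ hmem
    rw [map_smul, smul_eq_mul, div_mul_cancel₀ _ hyne] at h1
    linarith
  have hFne : ‖F‖ ≠ 0 := by
    rw [norm_ne_zero_iff]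
    intro h
    rw [h] at huF
    simp at huF
    linarith
  set ψ : X →L[ℝ] ℝ := ‖F‖⁻¹ • F with hψdef
  have hψnorm : ‖ψ‖ = 1 := by
    rw [hψdef, norm_smul (‖F‖⁻¹) F, norm_inv, norm_norm]
    field_simp
  have hψY : ∀ y ∈ Y, ψ y = 0 := fun y hy => by
    simp [hψdef, hFY y hy]
  -- decomposition of the f i
  have hdec : ∀ i, ∃ p : (X →L[ℝ] ℝ) × (X →L[ℝ] ℝ),
      p.1 ∈ Z ∧ (∀ y ∈ Y, p.2 y = 0) ∧ f i = p.1 + p.2 ∧ ‖f i‖ = ‖p.1‖ + ‖p.2‖ :=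
    fun i => (hdecomp (f i)).exists
  choose p hp1 hp2 hp3 hp4 using hdec
  have hsum1 : ∀ i, ‖(p i).1‖ + ‖(p i).2‖ = 1 := fun i => by rw [← hp4 i, hf i]
  set m := Finset.univ.inf' Finset.univ_nonempty ε with hm
  have hmpos : 0 < m := (Finset.lt_inf'_iff _).2 fun i _ => hε i
  -- lower bound
  have hdge : ∀ δ : ℝ, 0 < δ → 2 - δ ≤ Metric.diam (CombSlices lam f ε) := by
    intro δ hδ
    set γ := min δ m / 4 with hγdef
    have hγ : 0 < γ := by
      have h := lt_min hδ hmpos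
      rw [hγdef]; linarith
    have hγδ : 4 * γ ≤ δ := by
      rw [hγdef]
      have := min_le_left δ m
      linarith
    have hγε : ∀ i, 4 * γ ≤ ε i := fun i => by
      rw [hγdef]
      have h1 : m ≤ ε i := Finset.inf'_le _ (Finset.mem_univ i)
      have := min_le_right δ m
      linarith
    -- signed ψ
    set sψ : Bool → (X →L[ℝ] ℝ) := fun b => if b then ψ else -ψ with hsψ
    have hsψY : ∀ b, ∀ y ∈ Y, sψ b y = 0 := by
      intro b y hy
      cases b <;> simp [hsψ, hψY y hy]
    have hsψn : ∀ b, ‖sψ b‖ = 1 := by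
      intro b
      cases b <;> simp [hsψ, hψnorm]
    have hzψ : ∀ (i : Fin n) (b : Bool), ‖(p i).1 + sψ b‖ = ‖(p i).1‖ + 1 := by
      intro i b
      rw [aux_L1 Y Z hdecomp (hp1 i) (hsψY b), hsψn b]
    have hxq : ∀ q : Fin n × Bool, ∃ x : X, ‖x‖ ≤ 1 ∧
        ‖(p q.1).1 + sψ q.2‖ - γ / 2 < ((p q.1).1 + sψ q.2) x :=
      fun q => aux_norming _ (by linarith)
    choose xq hxq1 hxq2 using hxq
    obtain ⟨zh, hzhZ, hzh1, hzhapp⟩ :=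
      aux_approx Z hnorming xq ψ (le_of_eq hψnorm) (γ := γ / 2) (by linarith)
    set szh : Bool → (X →L[ℝ] ℝ) := fun b => if b then zh else -zh with hszh
    have hszhZ : ∀ b, szh b ∈ Z := by
      intro b
      cases b
      · simpa [hszh] using Z.neg_mem hzhZ
      · simpa [hszh] using hzhZ
    have hszh1 : ∀ b, ‖szh b‖ ≤ 1 := by
      intro b
      cases b
      · simpa [hszh] using hzh1
      · simpa [hszh] using hzh1
    have habs : ∀ (b : Bool) (x : X), |szh b x - sψ b x| = |zh x - ψ x| := by
      intro b x
      have e1 : szh true = zh := by simp [hszh]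
      have e2 : szh false = -zh := by simp [hszh]
      have e3 : sψ true = ψ := by simp [hsψ]
      have e4 : sψ false = -ψ := by simp [hsψ]
      cases b
      · rw [e2, e4, ContinuousLinearMap.neg_apply, ContinuousLinearMap.neg_apply,
          show -zh x - -ψ x = -(zh x - ψ x) by ring, abs_neg]
      · rw [e1, e3]
    have hkey : ∀ (i : Fin n) (b : Bool), 2 - γ ≤ ‖f i + szh b‖ := by
      intro i b
      have hx := hxq2 (i, b)
      rw [hzψ i b] at hx
      have h2 : |szh b (xq (i, b)) - sψ b (xq (i, b))| < γ / 2 := by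
        rw [habs b (xq (i, b))]
        exact hzhapp (i, b)
      have h3 := abs_lt.1 h2
      have h1 : ‖(p i).1‖ + 1 - γ ≤ ((p i).1 + szh b) (xq (i, b)) := by
        have e1 : ((p i).1 + szh b) (xq (i, b)) =
            ((p i).1 + sψ b) (xq (i, b)) + (szh b (xq (i, b)) - sψ b (xq (i, b))) := by
          simp only [ContinuousLinearMap.add_apply]
          ring
        rw [e1]
        linarith [h3.1]
      have h4 : ((p i).1 + szh b) (xq (i, b)) ≤ ‖(p i).1 + szh b‖ := by
        calc ((p i).1 + szh b) (xq (i, b)) ≤ |((p i).1 + szh b) (xq (i, b))| := le_abs_self _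
          _ = ‖((p i).1 + szh b) (xq (i, b))‖ := (Real.norm_eq_abs _).symm
          _ ≤ ‖(p i).1 + szh b‖ * ‖xq (i, b)‖ := ContinuousLinearMap.le_opNorm _ _
          _ ≤ ‖(p i).1 + szh b‖ := mul_le_of_le_one_right (norm_nonneg _) (hxq1 (i, b))
      have h5 : ‖f i + szh b‖ = ‖(p i).1 + szh b‖ + ‖(p i).2‖ := by
        have e : f i + szh b = ((p i).1 + szh b) + (p i).2 := by
          rw [hp3 i]; abel
        rw [e]
        exact aux_L1 Y Z hdecomp (Z.add_mem (hp1 i) (hszhZ b)) (hp2 i)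
      have h6 := hsum1 i
      linarith
    have huv : ∀ q : Fin n × Bool, ∃ x : X, ‖x‖ ≤ 1 ∧
        ‖f q.1 + szh q.2‖ - γ / 2 < (f q.1 + szh q.2) x :=
      fun q => aux_norming _ (by linarith)
    choose uv huv1 huv2 using huv
    have hslice : ∀ q : Fin n × Bool,
        1 - ε q.1 < f q.1 (uv q) ∧ 1 - 2 * γ < szh q.2 (uv q) := by
      intro q
      have h2 := huv2 q
      have hk := hkey q.1 q.2
      have hb1 : szh q.2 (uv q) ≤ 1 := aux_apply_le _ _ (hszh1 q.2) (huv1 q)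
      have hb2 : f q.1 (uv q) ≤ 1 := aux_apply_le _ _ (le_of_eq (hf q.1)) (huv1 q)
      have happ : (f q.1 + szh q.2) (uv q) = f q.1 (uv q) + szh q.2 (uv q) := rfl
      rw [happ] at h2
      have hγεq := hγε q.1
      constructor
      · linarith
      · linarith
    set a : X := ∑ i, lam i • uv (i, true) with haa
    set b : X := ∑ i, lam i • uv (i, false) with hbb
    have haC : a ∈ CombSlices lam f ε :=
      ⟨fun i => uv (i, true), fun i => ⟨huv1 _, (hslice (i, true)).1⟩, rfl⟩
    have hbC : b ∈ CombSlices lam f ε :=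
      ⟨fun i => uv (i, false), fun i => ⟨huv1 _, (hslice (i, false)).1⟩, rfl⟩
    have hab : 2 - 4 * γ ≤ zh (a - b) := by
      have e : zh (a - b) = ∑ i, lam i * (zh (uv (i, true)) - zh (uv (i, false))) := by
        rw [map_sub, haa, hbb, map_sum, map_sum, ← Finset.sum_sub_distrib]
        refine Finset.sum_congr rfl fun i _ => ?_
        rw [map_smul, map_smul, smul_eq_mul, smul_eq_mul]
        ring
      rw [e]
      calc (2 : ℝ) - 4 * γ = ∑ i, lam i * (2 - 4 * γ) := by
            rw [← Finset.sum_mul, hlam1, one_mul]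
        _ ≤ ∑ i, lam i * (zh (uv (i, true)) - zh (uv (i, false))) := by
            refine Finset.sum_le_sum fun i _ => mul_le_mul_of_nonneg_left ?_ (hlam i)
            have h1 := (hslice (i, true)).2
            have h2 := (hslice (i, false)).2
            have h1' : 1 - 2 * γ < zh (uv (i, true)) := by simpa [hszh] using h1
            have h2' : 1 - 2 * γ < -(zh (uv (i, false))) := by simpa [hszh] using h2
            linarith
    have hdist : 2 - δ ≤ dist a b := by
      have h1 : zh (a - b) ≤ ‖a - b‖ := by
        calc zh (a - b) ≤ |zh (a - b)| := le_abs_self _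
          _ = ‖zh (a - b)‖ := (Real.norm_eq_abs _).symm
          _ ≤ ‖zh‖ * ‖a - b‖ := zh.le_opNorm _
          _ ≤ 1 * ‖a - b‖ := mul_le_mul_of_nonneg_right hzh1 (norm_nonneg _)
          _ = ‖a - b‖ := one_mul _
      rw [dist_eq_norm]
      linarith
    exact le_trans hdist (Metric.dist_le_diam_of_mem hbdd haC hbC)
  have h2le : 2 ≤ Metric.diam (CombSlices lam f ε) :=
    le_of_forall_pos_le_add fun δ hδ => by
      have := hdge δ hδ
      linarith
  linarith
end

section
/- If a Banach space X is proper M-embedded (X is a proper M-ideal in its bidual X**), then both X and X** have the strong diameter 2 property. -/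
open Metric Set
open scoped ENNReal

section AuxSD2P

open NormedSpace

@[reducible] noncomputable def tripleDualNAG (X : Type*) [NormedAddCommGroup X] [NormedSpace ℝ X] :
    NormedAddCommGroup (StrongDual ℝ (StrongDual ℝ (StrongDual ℝ X))) :=
  ContinuousLinearMap.toNormedAddCommGroup (𝕜 := ℝ) (E := StrongDual ℝ (StrongDual ℝ X))
    (σ₁₂ := RingHom.id ℝ)

attribute [local instance] tripleDualNAG

@[reducible] noncomputable def tripleDualNS (X : Type*) [NormedAddCommGroup X] [NormedSpace ℝ X] :
    NormedSpace ℝ (StrongDual ℝ (StrongDual ℝ (StrongDual ℝ X))) :=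
  ContinuousLinearMap.toNormedSpace (𝕜 := ℝ) (E := StrongDual ℝ (StrongDual ℝ X))
    (σ₁₂ := RingHom.id ℝ)

attribute [local instance] tripleDualNS

/-- From a strict operator-norm bound, find a unit-ball vector with large *signed* value. -/
lemma pick_fun {E : Type*} [NormedAddCommGroup E] [NormedSpace ℝ E]
    (W : E →L[ℝ] ℝ) {r : ℝ} (hr : r < ‖W‖) : ∃ x : E, ‖x‖ ≤ 1 ∧ r < W x := by
  obtain ⟨x, hx, hrx⟩ := W.exists_lt_apply_of_lt_opNorm hr
  rcases le_or_gt (W x) 0 with h0 | h0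
  · refine ⟨-x, by simpa using hx.le, ?_⟩
    rw [map_neg]
    rw [Real.norm_eq_abs, abs_of_nonpos h0] at hrx
    linarith
  · refine ⟨x, hx.le, ?_⟩
    rwa [Real.norm_eq_abs, abs_of_pos h0] at hrx

/-- Finite-dimensional Goldstine lemma: an element of the bidual unit ball can be
approximated by an element of the unit ball against finitely many functionals. -/
lemma goldstine_fin {Y : Type*} [NormedAddCommGroup Y] [NormedSpace ℝ Y]
    {ι : Type*} [Fintype ι] (z : StrongDual ℝ (StrongDual ℝ Y)) (hz : ‖z‖ ≤ 1)
    (η : ι → StrongDual ℝ Y) {δ : ℝ} (hδ : 0 < δ) :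
    ∃ h : Y, ‖h‖ ≤ 1 ∧ ∀ i, |η i h - z (η i)| ≤ δ := by
  classical
  set T : Y →ₗ[ℝ] (ι → ℝ) := LinearMap.pi (fun i => (η i).toLinearMap) with hTdef
  have hTapp : ∀ (x : Y) (i : ι), T x i = η i x := fun x i => rfl
  set v : ι → ℝ := fun i => z (η i) with hvdef
  have hvC : v ∈ closure (T '' Metric.closedBall (0 : Y) 1) := by
    by_contra hvc
    obtain ⟨φ, u, hφu, huv⟩ := geometric_hahn_banach_closed_point
      ((convex_closedBall (0 : Y) 1).linear_image T).closure isClosed_closure hvc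
    set c : ι → ℝ := fun i => φ (fun j => if i = j then (1 : ℝ) else 0) with hcdef
    have hφ : ∀ w : ι → ℝ, φ w = ∑ i, w i * c i := by
      intro w
      conv_lhs => rw [pi_eq_sum_univ w]
      rw [map_sum]
      exact Finset.sum_congr rfl fun i _ => by rw [map_smul, smul_eq_mul]
    set g : StrongDual ℝ Y := ∑ i, c i • η i with hgdef
    have hgapp : ∀ x : Y, g x = φ (T x) := by
      intro x
      rw [hφ (T x)]
      simp only [hgdef, ContinuousLinearMap.sum_apply, ContinuousLinearMap.smul_apply,
        smul_eq_mul]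
      exact Finset.sum_congr rfl fun i _ => by rw [hTapp, mul_comm]
    have hball : ∀ x : Y, ‖x‖ ≤ 1 → φ (T x) < u := by
      intro x hx
      exact hφu _ (subset_closure ⟨x, by simpa [Metric.mem_closedBall] using hx, rfl⟩)
    have hu0 : 0 < u := by
      have := hball 0 (by simp)
      simpa using this
    have hgnorm : ‖g‖ ≤ u := by
      refine g.opNorm_le_bound hu0.le fun x => ?_
      rcases eq_or_ne x 0 with rfl | hx
      · simp
      · have hxn : (0 : ℝ) < ‖x‖ := norm_pos_iff.mpr hx
        set w := ‖x‖⁻¹ • x with hwdef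
        have hw1 : ‖w‖ ≤ 1 := by
          rw [hwdef, norm_smul, norm_inv, norm_norm, inv_mul_cancel₀ hxn.ne']
        have h1 : g w < u := by rw [hgapp]; exact hball w hw1
        have h2 : g (-w) < u := by rw [hgapp]; exact hball (-w) (by simpa using hw1)
        rw [map_neg] at h2
        have habs : |g w| ≤ u := abs_le.mpr ⟨by linarith, h1.le⟩
        have hxw : x = ‖x‖ • w := by rw [hwdef, smul_smul, mul_inv_cancel₀ hxn.ne', one_smul]
        have hgx : g x = ‖x‖ * g w := by
          nth_rewrite 1 [hxw]
          rw [map_smul, smul_eq_mul]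
        rw [Real.norm_eq_abs, hgx, abs_mul, abs_of_nonneg hxn.le]
        nlinarith
    have hzg : z g ≤ u := by
      calc z g ≤ |z g| := le_abs_self _
        _ = ‖z g‖ := (Real.norm_eq_abs _).symm
        _ ≤ ‖z‖ * ‖g‖ := z.le_opNorm g
        _ ≤ 1 * u := mul_le_mul hz hgnorm (norm_nonneg g) zero_le_one
        _ = u := one_mul u
    have hφv : φ v = z g := by
      rw [hφ v, hgdef, map_sum]
      exact Finset.sum_congr rfl fun i _ => by rw [map_smul, smul_eq_mul, mul_comm]
    linarith [huv, hφv ▸ hzg]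
  rw [Metric.mem_closure_iff] at hvC
  obtain ⟨b, hb, hdist⟩ := hvC δ hδ
  obtain ⟨h, hh, rfl⟩ := hb
  refine ⟨h, by simpa [Metric.mem_closedBall] using hh, fun i => ?_⟩
  have := dist_le_pi_dist (T h) v i
  rw [Real.dist_eq] at this
  have h2 : dist (T h) v < δ := by rwa [dist_comm] at hdist
  calc |η i h - z (η i)| = |T h i - v i| := by rw [hTapp]
    _ ≤ dist (T h) v := this
    _ ≤ δ := h2.le


/-- A proper closed subspace admits a norm-one annihilating functional. -/
lemma exists_unit_ann (X : Type*) [NormedAddCommGroup X] [NormedSpace ℝ X] [CompleteSpace X]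
    (hproper : ¬ Function.Surjective (inclusionInDoubleDual ℝ X)) :
    ∃ z : StrongDual ℝ (StrongDual ℝ (StrongDual ℝ X)), ‖z‖ = 1 ∧
      ∀ x : X, z (inclusionInDoubleDual ℝ X x) = 0 := by
  rw [Function.Surjective] at hproper
  push_neg at hproper
  obtain ⟨Φ₀, hΦ₀⟩ := hproper
  have hiso : Isometry (inclusionInDoubleDual ℝ X) :=
    (inclusionInDoubleDualLi ℝ (E := X)).isometry
  have hclosed : IsClosed (Set.range (inclusionInDoubleDual ℝ X)) :=
    hiso.isClosedEmbedding.isClosed_range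
  have hconv : Convex ℝ (Set.range (inclusionInDoubleDual ℝ X)) := by
    rintro a ⟨xa, rfl⟩ b ⟨xb, rfl⟩ s t hs ht hst
    exact ⟨s • xa + t • xb, by simp⟩
  have hmem : Φ₀ ∉ Set.range (inclusionInDoubleDual ℝ X) := by
    rintro ⟨x, rfl⟩
    exact hΦ₀ x rfl
  obtain ⟨φ, u, hφu, huΦ⟩ := geometric_hahn_banach_closed_point hconv hclosed hmem
  have hu0 : 0 < u := by simpa using hφu _ ⟨0, rfl⟩
  have hann : ∀ x : X, φ (inclusionInDoubleDual ℝ X x) = 0 := by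
    intro x
    by_contra hne
    have h2u := hφu _ ⟨(2 * u / φ (inclusionInDoubleDual ℝ X x)) • x, rfl⟩
    rw [map_smul, map_smul, smul_eq_mul, div_mul_cancel₀ _ hne] at h2u
    linarith
  have hn : ‖φ‖ ≠ 0 := by
    intro h0
    have h1 : φ Φ₀ ≤ ‖φ‖ * ‖Φ₀‖ := by
      calc φ Φ₀ ≤ |φ Φ₀| := le_abs_self _
        _ = ‖φ Φ₀‖ := (Real.norm_eq_abs _).symm
        _ ≤ ‖φ‖ * ‖Φ₀‖ := by
          exact ContinuousLinearMap.le_opNorm (𝕜 := ℝ) (E := StrongDual ℝ (StrongDual ℝ X))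
            (σ₁₂ := RingHom.id ℝ) φ _
    rw [h0, zero_mul] at h1
    linarith
  refine ⟨‖φ‖⁻¹ • φ, ?_, fun x => ?_⟩
  · rw [norm_smul, norm_inv, norm_norm]
    exact inv_mul_cancel₀ hn
  · simp only [ContinuousLinearMap.smul_apply, hann x, smul_eq_mul, mul_zero]

/-- Norm additivity of the ℓ¹-decomposition coming from `hM`. -/
lemma norm_decomp {X : Type*} [NormedAddCommGroup X] [NormedSpace ℝ X]
    (hM : ∀ F : StrongDual ℝ (StrongDual ℝ (StrongDual ℝ X)),
      ∃! p : (StrongDual ℝ X) × (StrongDual ℝ (StrongDual ℝ (StrongDual ℝ X))),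
        (∀ x : X, p.2 (inclusionInDoubleDual ℝ X x) = 0) ∧
        F = inclusionInDoubleDual ℝ (StrongDual ℝ X) p.1 + p.2 ∧
        ‖F‖ = ‖p.1‖ + ‖p.2‖)
    (f : StrongDual ℝ X) (G : StrongDual ℝ (StrongDual ℝ (StrongDual ℝ X)))
    (hG : ∀ x : X, G (inclusionInDoubleDual ℝ X x) = 0) :
    ‖inclusionInDoubleDual ℝ (StrongDual ℝ X) f + G‖ = ‖f‖ + ‖G‖ := by
  obtain ⟨p, ⟨hann, heq, hnorm⟩, -⟩ := hM (inclusionInDoubleDual ℝ (StrongDual ℝ X) f + G)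
  have hf : p.1 = f := by
    ext x
    have h1 := congrArg (fun W : StrongDual ℝ (StrongDual ℝ (StrongDual ℝ X)) =>
      W (inclusionInDoubleDual ℝ X x)) heq
    simp only [ContinuousLinearMap.add_apply, dual_def] at h1
    rw [hG x, hann x] at h1
    linarith
  have hGp : p.2 = G := by
    rw [hf] at heq
    exact (add_left_cancel heq.symm)
  rw [hnorm, hf, hGp]

/-- Octahedrality of the dual, with both signs. -/
lemma oct_lemma {X : Type*} [NormedAddCommGroup X] [NormedSpace ℝ X]
    (z : StrongDual ℝ (StrongDual ℝ (StrongDual ℝ X))) (hz1 : ‖z‖ = 1)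
    (hzann : ∀ x : X, z (inclusionInDoubleDual ℝ X x) = 0)
    (hL : ∀ (f : StrongDual ℝ X) (G : StrongDual ℝ (StrongDual ℝ (StrongDual ℝ X))),
      (∀ x : X, G (inclusionInDoubleDual ℝ X x) = 0) →
      ‖inclusionInDoubleDual ℝ (StrongDual ℝ X) f + G‖ = ‖f‖ + ‖G‖)
    {n : ℕ} (y : Fin n → StrongDual ℝ X) {δ : ℝ} (hδ : 0 < δ) :
    ∃ h : StrongDual ℝ X, ‖h‖ ≤ 1 ∧
      ∀ i, ‖y i‖ + 1 - δ ≤ ‖y i + h‖ ∧ ‖y i‖ + 1 - δ ≤ ‖y i - h‖ := by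
  have hzann' : ∀ x : X, (-z) (inclusionInDoubleDual ℝ X x) = 0 := by
    intro x
    change -(z (inclusionInDoubleDual ℝ X x)) = 0
    rw [hzann x, neg_zero]
  have Hp : ∀ i, ∃ Φ : StrongDual ℝ (StrongDual ℝ X), ‖Φ‖ ≤ 1 ∧
      ‖y i‖ + 1 - δ / 2 < (inclusionInDoubleDual ℝ (StrongDual ℝ X) (y i) + z) Φ := by
    intro i
    refine pick_fun (E := StrongDual ℝ (StrongDual ℝ X)) (inclusionInDoubleDual ℝ (StrongDual ℝ X) (y i) + z) ?_
    rw [hL (y i) z hzann, hz1]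
    linarith
  have Hm : ∀ i, ∃ Φ : StrongDual ℝ (StrongDual ℝ X), ‖Φ‖ ≤ 1 ∧
      ‖y i‖ + 1 - δ / 2 < (inclusionInDoubleDual ℝ (StrongDual ℝ X) (y i) + (-z)) Φ := by
    intro i
    refine pick_fun (E := StrongDual ℝ (StrongDual ℝ X)) (inclusionInDoubleDual ℝ (StrongDual ℝ X) (y i) + (-z)) ?_
    rw [hL (y i) (-z) hzann', norm_neg, hz1]
    linarith
  choose Φp hΦp1 hΦp2 using Hp
  choose Φm hΦm1 hΦm2 using Hm
  obtain ⟨h, hh1, hclose⟩ := goldstine_fin z hz1.le (Sum.elim Φp Φm)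
    (δ := δ / 2) (by linarith)
  refine ⟨h, hh1, fun i => ?_⟩
  have hcp := hclose (Sum.inl i)
  have hcm := hclose (Sum.inr i)
  simp only [Sum.elim_inl, Sum.elim_inr] at hcp hcm
  rw [abs_le] at hcp hcm
  have hWp := hΦp2 i
  have hWm := hΦm2 i
  simp only [ContinuousLinearMap.add_apply, ContinuousLinearMap.neg_apply, dual_def]
    at hWp hWm
  constructor
  · have e1 : Φp i (y i + h) ≤ ‖y i + h‖ := by
      calc Φp i (y i + h) ≤ |Φp i (y i + h)| := le_abs_self _
        _ = ‖Φp i (y i + h)‖ := (Real.norm_eq_abs _).symm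
        _ ≤ ‖Φp i‖ * ‖y i + h‖ := (Φp i).le_opNorm _
        _ ≤ 1 * ‖y i + h‖ := by
            exact mul_le_mul_of_nonneg_right (hΦp1 i) (norm_nonneg _)
        _ = ‖y i + h‖ := one_mul _
    have e2 : Φp i (y i + h) = Φp i (y i) + Φp i h := map_add _ _ _
    linarith [hcp.1]
  · have e1 : Φm i (y i - h) ≤ ‖y i - h‖ := by
      calc Φm i (y i - h) ≤ |Φm i (y i - h)| := le_abs_self _
        _ = ‖Φm i (y i - h)‖ := (Real.norm_eq_abs _).symm
        _ ≤ ‖Φm i‖ * ‖y i - h‖ := (Φm i).le_opNorm _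
        _ ≤ 1 * ‖y i - h‖ := by
            exact mul_le_mul_of_nonneg_right (hΦm1 i) (norm_nonneg _)
        _ = ‖y i - h‖ := one_mul _
    have e2 : Φm i (y i - h) = Φm i (y i) - Φm i h := map_sub _ _ _
    linarith [hcm.2]


/-- If the dual is "octahedral at" every finite family of unit functionals,
then the space has the strong diameter 2 property. -/
lemma sd2p_of_oh {E : Type*} [NormedAddCommGroup E] [NormedSpace ℝ E]
    (hOH : ∀ (n : ℕ) (f : Fin n → E →L[ℝ] ℝ), (∀ i, ‖f i‖ = 1) → ∀ δ : ℝ, 0 < δ →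
      ∃ H : E →L[ℝ] ℝ, ‖H‖ ≤ 1 ∧ ∀ i, 2 - δ ≤ ‖f i + H‖ ∧ 2 - δ ≤ ‖f i - H‖) :
    StrongD2P E := by
  intro n lam f ε hlam hsum hf hε
  have happ : ∀ (H : E →L[ℝ] ℝ) (x : E), ‖H‖ ≤ 1 → ‖x‖ ≤ 1 → H x ≤ 1 := by
    intro H x hH hx
    calc H x ≤ |H x| := le_abs_self _
      _ = ‖H x‖ := (Real.norm_eq_abs _).symm
      _ ≤ ‖H‖ * ‖x‖ := H.le_opNorm x
      _ ≤ 1 * 1 := mul_le_mul hH hx (norm_nonneg x) zero_le_one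
      _ = 1 := one_mul 1
  have hsub : CombSlices lam f ε ⊆ Metric.closedBall (0 : E) 1 := by
    rintro x ⟨g, hg, rfl⟩
    rw [Metric.mem_closedBall, dist_zero_right]
    calc ‖∑ i, lam i • g i‖ ≤ ∑ i, ‖lam i • g i‖ := norm_sum_le _ _
      _ ≤ ∑ i, lam i := Finset.sum_le_sum (fun i _ => by
          rw [norm_smul, Real.norm_eq_abs, abs_of_nonneg (hlam i)]
          exact mul_le_of_le_one_right (hlam i) (hg i).1)
      _ = 1 := hsum
  have hbdd : Bornology.IsBounded (CombSlices lam f ε) :=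
    Metric.isBounded_closedBall.subset hsub
  have hub : Metric.diam (CombSlices lam f ε) ≤ 2 := by
    refine Metric.diam_le_of_forall_dist_le (by norm_num) ?_
    intro u hu v hv
    have hu1 : ‖u‖ ≤ 1 := by
      have := hsub hu
      rwa [Metric.mem_closedBall, dist_zero_right] at this
    have hv1 : ‖v‖ ≤ 1 := by
      have := hsub hv
      rwa [Metric.mem_closedBall, dist_zero_right] at this
    calc dist u v = ‖u - v‖ := dist_eq_norm u v
      _ ≤ ‖u‖ + ‖v‖ := norm_sub_le u v
      _ ≤ 2 := by linarith
  have hn : 0 < n := by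
    rcases Nat.eq_zero_or_pos n with rfl | h
    · simp at hsum
    · exact h
  haveI hne : Nonempty (Fin n) := Fin.pos_iff_nonempty.mp hn
  have hlb : ∀ c : ℝ, 0 < c → 2 - c ≤ Metric.diam (CombSlices lam f ε) := by
    intro c hc
    set εm := Finset.univ.inf' Finset.univ_nonempty ε with hεm
    have hεm0 : 0 < εm := (Finset.lt_inf'_iff _).mpr (fun i _ => hε i)
    have hεmle : ∀ i, εm ≤ ε i := fun i => Finset.inf'_le ε (Finset.mem_univ i)
    set δ := min (c / 4) (εm / 2) with hδdef
    have hδ0 : 0 < δ := lt_min (by linarith) (by linarith)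
    have hδc : δ ≤ c / 4 := min_le_left _ _
    have hδε : ∀ i, 2 * δ ≤ ε i := by
      intro i
      have := min_le_right (c / 4) (εm / 2)
      have := hεmle i
      simp only [hδdef]
      linarith
    obtain ⟨H, hH1, hHb⟩ := hOH n f hf δ hδ0
    have Hx : ∀ i, ∃ x : E, ‖x‖ ≤ 1 ∧ 2 - 2 * δ < (f i + H) x := by
      intro i
      refine pick_fun (f i + H) (lt_of_lt_of_le ?_ (hHb i).1)
      linarith
    have Hy : ∀ i, ∃ y : E, ‖y‖ ≤ 1 ∧ 2 - 2 * δ < (f i - H) y := by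
      intro i
      refine pick_fun (f i - H) (lt_of_lt_of_le ?_ (hHb i).2)
      linarith
    choose xs hxs1 hxs2 using Hx
    choose ys hys1 hys2 using Hy
    have hfx : ∀ i, 1 - 2 * δ < f i (xs i) := by
      intro i
      have h1 : H (xs i) ≤ 1 := happ H (xs i) hH1 (hxs1 i)
      have h2 := hxs2 i
      rw [ContinuousLinearMap.add_apply] at h2
      linarith
    have hHx : ∀ i, 1 - 2 * δ < H (xs i) := by
      intro i
      have h1 : f i (xs i) ≤ 1 := happ (f i) (xs i) (hf i).le (hxs1 i)
      have h2 := hxs2 i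
      rw [ContinuousLinearMap.add_apply] at h2
      linarith
    have hfy : ∀ i, 1 - 2 * δ < f i (ys i) := by
      intro i
      have h1 : H (ys i) ≥ -1 := by
        have := happ (-H) (ys i) (by rwa [norm_neg]) (hys1 i)
        rw [ContinuousLinearMap.neg_apply] at this
        linarith
      have h2 := hys2 i
      rw [ContinuousLinearMap.sub_apply] at h2
      linarith
    have hHy : ∀ i, H (ys i) < -(1 - 2 * δ) := by
      intro i
      have h1 : f i (ys i) ≤ 1 := happ (f i) (ys i) (hf i).le (hys1 i)
      have h2 := hys2 i
      rw [ContinuousLinearMap.sub_apply] at h2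
      linarith
    have hmemx : ∀ i, xs i ∈ Slice (f i) (ε i) := by
      intro i
      refine ⟨hxs1 i, ?_⟩
      have := hδε i
      have := hfx i
      linarith
    have hmemy : ∀ i, ys i ∈ Slice (f i) (ε i) := by
      intro i
      refine ⟨hys1 i, ?_⟩
      have := hδε i
      have := hfy i
      linarith
    set u := ∑ i, lam i • xs i with hudef
    set v := ∑ i, lam i • ys i with hvdef
    have hu : u ∈ CombSlices lam f ε := ⟨xs, hmemx, rfl⟩
    have hv : v ∈ CombSlices lam f ε := ⟨ys, hmemy, rfl⟩
    have hHuv : 2 - 4 * δ ≤ H (u - v) := by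
      have h1 : H (u - v) = ∑ i, lam i * (H (xs i) - H (ys i)) := by
        rw [map_sub, hudef, hvdef, map_sum, map_sum, ← Finset.sum_sub_distrib]
        exact Finset.sum_congr rfl fun i _ => by
          rw [map_smul, map_smul, smul_eq_mul, smul_eq_mul, mul_sub]
      rw [h1]
      calc 2 - 4 * δ = ∑ i, lam i * (2 - 4 * δ) := by
            rw [← Finset.sum_mul, hsum, one_mul]
        _ ≤ ∑ i, lam i * (H (xs i) - H (ys i)) := by
            refine Finset.sum_le_sum fun i _ => ?_
            have h2 := hHx i
            have h3 := hHy i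
            have := mul_le_mul_of_nonneg_left
              (by linarith : 2 - 4 * δ ≤ H (xs i) - H (ys i)) (hlam i)
            linarith
    have hduv : 2 - 4 * δ ≤ dist u v := by
      have h1 : H (u - v) ≤ ‖u - v‖ := by
        calc H (u - v) ≤ |H (u - v)| := le_abs_self _
          _ = ‖H (u - v)‖ := (Real.norm_eq_abs _).symm
          _ ≤ ‖H‖ * ‖u - v‖ := H.le_opNorm _
          _ ≤ 1 * ‖u - v‖ := mul_le_mul_of_nonneg_right hH1 (norm_nonneg _)
          _ = ‖u - v‖ := one_mul _
      rw [dist_eq_norm]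
      linarith
    calc 2 - c ≤ 2 - 4 * δ := by linarith
      _ ≤ dist u v := hduv
      _ ≤ Metric.diam (CombSlices lam f ε) := Metric.dist_le_diam_of_mem hbdd hu hv
  refine le_antisymm hub (le_of_forall_sub_le fun c hc => hlb c hc)

end AuxSD2P

open NormedSpace in
/-- If `X` is a proper `M`-embedded Banach space, i.e. `X` is a proper subspace of `X**`
and `X*** = X* ⊕₁ X^⊥`, then both `X` and `X**` have the strong diameter 2 property.
Here `X*** = (X**)*`, the copy of `X*` in `X***` is the canonical embedding of `X*` into
its bidual, and `X^⊥ ⊆ X***` is the annihilator of the canonical image of `X` in `X**`. -/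
theorem stmt_18 (X : Type*) [NormedAddCommGroup X] [NormedSpace ℝ X] [CompleteSpace X]
    (hproper : ¬ Function.Surjective (inclusionInDoubleDual ℝ X))
    (hM : ∀ F : StrongDual ℝ (StrongDual ℝ (StrongDual ℝ X)),
      ∃! p : (StrongDual ℝ X) × (StrongDual ℝ (StrongDual ℝ (StrongDual ℝ X))),
        (∀ x : X, p.2 (inclusionInDoubleDual ℝ X x) = 0) ∧
        F = inclusionInDoubleDual ℝ (StrongDual ℝ X) p.1 + p.2 ∧
        @norm _ (ContinuousLinearMap.hasOpNorm (𝕜 := ℝ) (E := StrongDual ℝ (StrongDual ℝ X)) (σ₁₂ := RingHom.id ℝ)) F = ‖p.1‖ + @norm _ (ContinuousLinearMap.hasOpNorm (𝕜 := ℝ) (E := StrongDual ℝ (StrongDual ℝ X)) (σ₁₂ := RingHom.id ℝ)) p.2) :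
    StrongD2P X ∧ StrongD2P (StrongDual ℝ (StrongDual ℝ X)) := by
  letI := tripleDualNAG X
  letI := tripleDualNS X
  obtain ⟨z, hz1, hzann⟩ := exists_unit_ann X hproper
  have hL : ∀ (f : StrongDual ℝ X) (G : StrongDual ℝ (StrongDual ℝ (StrongDual ℝ X))),
      (∀ x : X, G (inclusionInDoubleDual ℝ X x) = 0) →
      ‖inclusionInDoubleDual ℝ (StrongDual ℝ X) f + G‖ = ‖f‖ + ‖G‖ :=
    fun f G hG => norm_decomp hM f G hG
  constructor
  · refine sd2p_of_oh fun n f hf δ hδ => ?_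
    obtain ⟨h, hh1, hhb⟩ := oct_lemma z hz1 hzann hL f hδ
    refine ⟨h, hh1, fun i => ?_⟩
    have h1 := (hhb i).1
    have h2 := (hhb i).2
    rw [hf i] at h1 h2
    exact ⟨by linarith, by linarith⟩
  · refine sd2p_of_oh fun n F hF δ hδ => ?_
    choose p hp using fun i => (hM (F i)).exists
    obtain ⟨h, hh1, hhb⟩ := oct_lemma z hz1 hzann hL (fun i => (p i).1) hδ
    refine ⟨inclusionInDoubleDual ℝ (StrongDual ℝ X) h,
      le_trans (double_dual_bound ℝ (StrongDual ℝ X) h) hh1, fun i => ?_⟩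
    obtain ⟨hann_i, heq_i, hnorm_i⟩ := hp i
    have hsumnorm : ‖(p i).1‖ + ‖(p i).2‖ = 1 := by rw [← hnorm_i, hF i]
    have hb1 := (hhb i).1
    have hb2 := (hhb i).2
    constructor
    · have e : F i + inclusionInDoubleDual ℝ (StrongDual ℝ X) h =
          inclusionInDoubleDual ℝ (StrongDual ℝ X) ((p i).1 + h) + (p i).2 := by
        rw [heq_i, map_add]
        abel
      rw [e, hL ((p i).1 + h) (p i).2 hann_i]
      linarith [norm_nonneg ((p i).2)]
    · have e : F i - inclusionInDoubleDual ℝ (StrongDual ℝ X) h =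
          inclusionInDoubleDual ℝ (StrongDual ℝ X) ((p i).1 - h) + (p i).2 := by
        rw [heq_i, map_sub]
        abel
      rw [e, hL ((p i).1 - h) (p i).2 hann_i]
      linarith [norm_nonneg ((p i).2)]
end

section
/- If every finite convex combination of slices of the unit ball B_{X**} of the bidual has diameter 2 (computed with weak* slices defined by functionals from X*), then X has the strong diameter 2 property; more generally, if B_X is weak* dense in B_{X**} and the norm is weak* lower semicontinuous, diameter-2 statements for weak* slices of B_{X**} transfer to slices of B_X. -/
open Metric Set
open scoped ENNReal

open NormedSpace

/-- Approximate Goldstine/Helly: any element of the bidual unit ball can be approximated,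
on finitely many functionals, by an element of `X` of norm at most `1 + δ`. -/
lemma helly_approx {X : Type*} [NormedAddCommGroup X] [NormedSpace ℝ X]
    (F : StrongDual ℝ (StrongDual ℝ X)) (hF : ‖F‖ ≤ 1) {m : ℕ} (g : Fin m → StrongDual ℝ X)
    {δ : ℝ} (hδ : 0 < δ) :
    ∃ x : X, ‖x‖ ≤ 1 + δ ∧ ∀ j, |g j x - F (g j)| < δ := by
  set r : ℝ := 1 + δ / 2 with hr_def
  have hr1 : 1 < r := by simp [hr_def]; linarith
  have hr0 : 0 < r := by linarith
  set T : X →L[ℝ] (Fin m → ℝ) := ContinuousLinearMap.pi g with hT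
  set v₀ : Fin m → ℝ := fun j => F (g j) with hv₀_def
  have hv₀ : v₀ ∈ closure (T '' closedBall (0 : X) r) := by
    by_contra hv
    obtain ⟨ψ, u, hs, hu⟩ := geometric_hahn_banach_closed_point
      (((convex_closedBall (0 : X) r).linear_image T.toLinearMap).closure)
      isClosed_closure hv
    -- the functional `h` on `X` corresponding to `ψ ∘ T`
    set hfun : StrongDual ℝ X := ∑ j, ψ (Pi.single j 1) • g j with hfun_def
    have key : ∀ x : X, ψ (T x) = hfun x := by
      intro x
      have hTx : T x = ∑ j, (g j x) • (Pi.single j (1 : ℝ) : Fin m → ℝ) := by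
        ext k
        simp [hT, ContinuousLinearMap.pi_apply, Pi.single_apply, Finset.sum_ite_eq',
          Finset.mem_univ]
      rw [hTx]
      simp [hfun_def, ContinuousLinearMap.sum_apply, ContinuousLinearMap.smul_apply,
        map_sum, map_smul, smul_eq_mul, mul_comm]
    have keyF : ψ v₀ = F hfun := by
      have hv0 : v₀ = ∑ j, (F (g j)) • (Pi.single j (1 : ℝ) : Fin m → ℝ) := by
        ext k
        simp [hv₀_def, Pi.single_apply, Finset.sum_ite_eq', Finset.mem_univ]
      rw [hv0]
      simp [hfun_def, map_sum, map_smul, smul_eq_mul, mul_comm]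
    have hu0 : 0 < u := by
      have h0 : (0 : Fin m → ℝ) ∈ closure (T '' closedBall (0 : X) r) := by
        apply subset_closure
        exact ⟨0, by simp [hr0.le], by simp⟩
      have := hs 0 h0
      simpa using this
    -- bound on ‖hfun‖
    have hball : ∀ x : X, ‖x‖ ≤ r → ‖hfun x‖ ≤ u := by
      intro x hx
      have h1 : hfun x < u := by
        rw [← key]
        exact hs _ (subset_closure ⟨x, by simpa using hx, rfl⟩)
      have h2 : hfun (-x) < u := by
        rw [← key]
        exact hs _ (subset_closure ⟨-x, by simpa using hx, rfl⟩)
      rw [Real.norm_eq_abs, abs_le]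
      constructor
      · have : -(hfun x) < u := by simpa using h2
        linarith
      · linarith
    have hnorm : ‖hfun‖ ≤ u / r := by
      apply ContinuousLinearMap.opNorm_le_bound _ (by positivity)
      intro x
      rcases eq_or_ne x 0 with rfl | hx0
      · simp
      · have hxn : 0 < ‖x‖ := norm_pos_iff.mpr hx0
        have := hball ((r / ‖x‖) • x) (by
          rw [norm_smul, Real.norm_eq_abs, abs_of_pos (by positivity)]
          field_simp
          exact le_rfl)
        rw [map_smul, smul_eq_mul, Real.norm_eq_abs, abs_mul,
          abs_of_pos (by positivity : (0:ℝ) < r / ‖x‖)] at this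
        rw [Real.norm_eq_abs]
        calc |hfun x| = (r / ‖x‖ * |hfun x|) * (‖x‖ / r) := by field_simp
          _ ≤ u * (‖x‖ / r) := by
              apply mul_le_mul_of_nonneg_right this (by positivity)
          _ = u / r * ‖x‖ := by ring
    have hFh : F hfun ≤ u / r := by
      calc F hfun ≤ |F hfun| := le_abs_self _
        _ ≤ ‖F‖ * ‖hfun‖ := F.le_opNorm hfun
        _ ≤ 1 * (u / r) := by
            apply mul_le_mul hF hnorm (norm_nonneg _) (by norm_num)
        _ = u / r := one_mul _
    have : u / r < u := by
      rw [div_lt_iff₀ hr0]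
      nlinarith
    rw [keyF] at hu
    linarith
  rw [Metric.mem_closure_iff] at hv₀
  obtain ⟨v, hv, hvd⟩ := hv₀ δ hδ
  obtain ⟨x, hx, rfl⟩ := hv
  refine ⟨x, ?_, fun j => ?_⟩
  · have h1 : ‖x‖ ≤ r := by simpa using hx
    rw [hr_def] at h1
    linarith
  · have e1 : |g j x - F (g j)| = dist (T x j) (v₀ j) := by
      simp [hT, Real.dist_eq, hv₀_def]
    have e2 : dist (T x j) (v₀ j) ≤ dist (T x) v₀ := dist_le_pi_dist _ _ _
    rw [dist_comm] at hvd
    calc |g j x - F (g j)| = dist (T x j) (v₀ j) := e1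
      _ ≤ dist (T x) v₀ := e2
      _ < δ := hvd

set_option maxHeartbeats 1000000 in
theorem strongD2P_aux (X : Type*) [NormedAddCommGroup X] [NormedSpace ℝ X] [CompleteSpace X]
    (h : ∀ (n : ℕ) (lam : Fin n → ℝ) (f : Fin n → StrongDual ℝ X) (ε : Fin n → ℝ),
      (∀ i, 0 ≤ lam i) → ∑ i, lam i = 1 → (∀ i, ‖f i‖ = 1) → (∀ i, 0 < ε i) →
      Metric.diam {F : StrongDual ℝ (StrongDual ℝ X) |
        ∃ G : Fin n → StrongDual ℝ (StrongDual ℝ X),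
          (∀ i, ‖G i‖ ≤ 1 ∧ 1 - ε i < G i (f i)) ∧ F = ∑ i, lam i • G i} = 2) :
    (∀ (n : ℕ) (lam : Fin n → ℝ) (f : Fin n → X →L[ℝ] ℝ) (ε : Fin n → ℝ),
    (∀ i, 0 ≤ lam i) → ∑ i, lam i = 1 → (∀ i, ‖f i‖ = 1) → (∀ i, 0 < ε i) →
    Metric.diam {x | ∃ g : Fin n → X, (∀ i, ‖g i‖ ≤ 1 ∧ 1 - ε i < f i (g i)) ∧ x = ∑ i, lam i • g i} = 2) := by
  intro n lam f ε hlam hsum hf hε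
  rcases Nat.eq_zero_or_pos n with rfl | hn
  · simp at hsum
  haveI : Nonempty (Fin n) := Fin.pos_iff_nonempty.mp hn
  set S : Set X :=
    {x | ∃ g : Fin n → X, (∀ i, ‖g i‖ ≤ 1 ∧ 1 - ε i < f i (g i)) ∧ x = ∑ i, lam i • g i} with hS
  -- every element of S has norm at most 1
  have hnorm1 : ∀ x ∈ S, ‖x‖ ≤ 1 := by
    rintro x ⟨g, hg, rfl⟩
    calc ‖∑ i, lam i • g i‖ ≤ ∑ i, ‖lam i • g i‖ := norm_sum_le _ _
      _ ≤ ∑ i, lam i := by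
          apply Finset.sum_le_sum
          intro i _
          rw [norm_smul, Real.norm_eq_abs, abs_of_nonneg (hlam i)]
          calc lam i * ‖g i‖ ≤ lam i * 1 :=
                mul_le_mul_of_nonneg_left (hg i).1 (hlam i)
            _ = lam i := mul_one _
      _ = 1 := hsum
  have hSsub : S ⊆ closedBall (0 : X) 1 := by
    intro x hx; rw [mem_closedBall, dist_zero_right]; exact hnorm1 x hx
  have hSbdd : Bornology.IsBounded S := (isBounded_closedBall).subset hSsub
  have hle : Metric.diam S ≤ 2 := by
    apply Metric.diam_le_of_forall_dist_le (by norm_num)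
    intro x hx y hy
    rw [dist_eq_norm]
    calc ‖x - y‖ ≤ ‖x‖ + ‖y‖ := norm_sub_le _ _
      _ ≤ 1 + 1 := add_le_add (hnorm1 x hx) (hnorm1 y hy)
      _ = 2 := by norm_num
  -- lower bound
  have hge : ∀ δ : ℝ, 0 < δ → δ < 1 → 2 - 2 * δ ≤ Metric.diam S := by
    intro δ hδ0 hδ1
    have hdiam := h n lam f ε hlam hsum hf hε
    set B : Set (StrongDual ℝ (StrongDual ℝ X)) :=
      {F : StrongDual ℝ (StrongDual ℝ X) | ∃ G : Fin n → StrongDual ℝ (StrongDual ℝ X),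
        (∀ i, ‖G i‖ ≤ 1 ∧ 1 - ε i < G i (f i)) ∧ F = ∑ i, lam i • G i} with hB
    have hex : ∃ F ∈ B, ∃ G ∈ B, 2 - δ < dist F G := by
      by_contra hall
      push_neg at hall
      have : Metric.diam B ≤ 2 - δ := Metric.diam_le_of_forall_dist_le (by linarith) hall
      rw [hdiam] at this; linarith
    obtain ⟨F, hFmem, G, hGmem, hFG⟩ := hex
    obtain ⟨Fg, hFg, rfl⟩ := hFmem
    obtain ⟨Gg, hGg, rfl⟩ := hGmem
    set F : StrongDual ℝ (StrongDual ℝ X) := ∑ i, lam i • Fg i with hFdef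
    set G : StrongDual ℝ (StrongDual ℝ X) := ∑ i, lam i • Gg i with hGdef
    -- find a norming functional φ
    have hφex : ∃ φ : StrongDual ℝ X, ‖φ‖ ≤ 1 ∧ 2 - δ < F φ - G φ := by
      replace hFG : 2 - δ < ‖F - G‖ := lt_of_lt_of_eq hFG (dist_eq_norm F G)
      obtain ⟨φ₀, hφ₀n, hφ₀v⟩ := (F - G).exists_lt_apply_of_lt_opNorm hFG
      rcases le_or_gt 0 ((F - G) φ₀) with hsgn | hsgn
      · refine ⟨φ₀, hφ₀n.le, ?_⟩
        rw [Real.norm_eq_abs, abs_of_nonneg hsgn, ContinuousLinearMap.sub_apply] at hφ₀v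
        linarith
      · refine ⟨-φ₀, by simpa using hφ₀n.le, ?_⟩
        rw [Real.norm_eq_abs, abs_of_neg hsgn, ContinuousLinearMap.sub_apply] at hφ₀v
        rw [map_neg, map_neg]
        linarith
    obtain ⟨φ, hφn, hφv⟩ := hφex
    -- the margin
    obtain ⟨c, hc0, hcF, hcG⟩ : ∃ c : ℝ, 0 < c ∧ (∀ i, c ≤ Fg i (f i) - (1 - ε i)) ∧
        (∀ i, c ≤ Gg i (f i) - (1 - ε i)) := by
      refine ⟨Finset.univ.inf' Finset.univ_nonempty
        (fun i => min (Fg i (f i) - (1 - ε i)) (Gg i (f i) - (1 - ε i))), ?_, ?_, ?_⟩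
      · rw [Finset.lt_inf'_iff]
        intro i _
        exact lt_min (by linarith [(hFg i).2]) (by linarith [(hGg i).2])
      · exact fun i => le_trans (Finset.inf'_le _ (Finset.mem_univ i)) (min_le_left _ _)
      · exact fun i => le_trans (Finset.inf'_le _ (Finset.mem_univ i)) (min_le_right _ _)
    obtain ⟨η, hη0, hηc, hηδ⟩ : ∃ η : ℝ, 0 < η ∧ η ≤ c / 3 ∧ η ≤ δ / 8 :=
      ⟨min (c / 3) (δ / 8), lt_min (by linarith) (by linarith), min_le_left _ _,
        min_le_right _ _⟩
    have h1η : (0 : ℝ) < 1 + η := by linarith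
    -- approximate each Fg i and Gg i
    choose xx hxxn hxxv using fun i => helly_approx (Fg i) (hFg i).1 ![φ, f i] hη0
    choose yy hyyn hyyv using fun i => helly_approx (Gg i) (hGg i).1 ![φ, f i] hη0
    set x' : Fin n → X := fun i => (1 + η)⁻¹ • xx i with hx'_def
    set y' : Fin n → X := fun i => (1 + η)⁻¹ • yy i with hy'_def
    -- generic slice-membership lemma
    have slice_mem : ∀ (H : Fin n → StrongDual ℝ (StrongDual ℝ X)) (z : Fin n → X)
        (z' : Fin n → X), (∀ i, ‖H i‖ ≤ 1 ∧ 1 - ε i < H i (f i)) →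
        (∀ i, ‖z i‖ ≤ 1 + η) → (∀ i, ∀ j, |(![φ, f i] j) (z i) - H i (![φ, f i] j)| < η) →
        (∀ i, c ≤ H i (f i) - (1 - ε i)) →
        (z' = fun i => (1 + η)⁻¹ • z i) →
        ∀ i, ‖z' i‖ ≤ 1 ∧ 1 - ε i < f i (z' i) := by
      intro H z z' hH hzn hzv hcH hz'
      intro i
      have hfz : |f i (z i) - H i (f i)| < η := by
        have := hzv i 1
        simpa using this
      constructor
      · rw [hz']
        simp only [norm_smul, Real.norm_eq_abs, abs_of_pos (inv_pos.mpr h1η)]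
        rw [inv_mul_le_iff₀ h1η, mul_one]
        exact hzn i
      · rw [hz']
        simp only [map_smul, smul_eq_mul]
        rw [inv_mul_eq_div, lt_div_iff₀ h1η]
        have h1 : H i (f i) - η < f i (z i) := by
          have := abs_lt.mp hfz
          linarith [this.1]
        have h2 : c ≤ H i (f i) - (1 - ε i) := hcH i
        have hexp : (1 - ε i) * (1 + η) = 1 - ε i + η - η * ε i := by ring
        have hpos : 0 < η * ε i := mul_pos hη0 (hε i)
        rw [hexp]
        linarith
    have hxmem := slice_mem Fg xx x' hFg hxxn hxxv hcF hx'_def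
    have hymem := slice_mem Gg yy y' hGg hyyn hyyv hcG hy'_def
    -- φ estimates
    have hφx : ∀ i, Fg i φ - 2 * η ≤ φ (x' i) := by
      intro i
      have hv : |φ (xx i) - Fg i φ| < η := by have := hxxv i 0; simpa using this
      have hb : Fg i φ ≤ 1 := by
        calc Fg i φ ≤ |Fg i φ| := le_abs_self _
          _ ≤ ‖Fg i‖ * ‖φ‖ := (Fg i).le_opNorm φ
          _ ≤ 1 * 1 := mul_le_mul (hFg i).1 hφn (norm_nonneg _) (by norm_num)
          _ = 1 := one_mul _
      rw [hx'_def]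
      simp only [map_smul, smul_eq_mul]
      rw [inv_mul_eq_div, le_div_iff₀ h1η]
      have h1 : Fg i φ - η < φ (xx i) := by
        have := abs_lt.mp hv; linarith [this.1]
      have hexp : (Fg i φ - 2 * η) * (1 + η) = Fg i φ - 2 * η + η * Fg i φ - 2 * (η * η) := by
        ring
      have hp : η * Fg i φ ≤ η * 1 := mul_le_mul_of_nonneg_left hb hη0.le
      have hq : 0 ≤ η * η := mul_nonneg hη0.le hη0.le
      rw [hexp]
      linarith
    have hφy : ∀ i, φ (y' i) ≤ Gg i φ + 2 * η := by
      intro i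
      have hv : |φ (yy i) - Gg i φ| < η := by have := hyyv i 0; simpa using this
      have hb : -1 ≤ Gg i φ := by
        have : |Gg i φ| ≤ 1 := by
          calc |Gg i φ| ≤ ‖Gg i‖ * ‖φ‖ := (Gg i).le_opNorm φ
            _ ≤ 1 * 1 := mul_le_mul (hGg i).1 hφn (norm_nonneg _) (by norm_num)
            _ = 1 := one_mul _
        linarith [(abs_le.mp this).1]
      rw [hy'_def]
      simp only [map_smul, smul_eq_mul]
      rw [inv_mul_eq_div, div_le_iff₀ h1η]
      have h1 : φ (yy i) < Gg i φ + η := by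
        have := abs_lt.mp hv; linarith [this.2]
      have hexp : (Gg i φ + 2 * η) * (1 + η) = Gg i φ + 2 * η + η * Gg i φ + 2 * (η * η) := by
        ring
      have hp : η * (-1) ≤ η * Gg i φ := mul_le_mul_of_nonneg_left hb hη0.le
      have hq : 0 ≤ η * η := mul_nonneg hη0.le hη0.le
      rw [hexp]
      linarith
    -- assemble
    set x : X := ∑ i, lam i • x' i with hx_def
    set y : X := ∑ i, lam i • y' i with hy_def
    have hxS : x ∈ S := ⟨x', hxmem, rfl⟩
    have hyS : y ∈ S := ⟨y', hymem, rfl⟩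
    have hφxsum : φ x = ∑ i, lam i * φ (x' i) := by
      rw [hx_def, map_sum]; simp [smul_eq_mul]
    have hφysum : φ y = ∑ i, lam i * φ (y' i) := by
      rw [hy_def, map_sum]; simp [smul_eq_mul]
    have hFφ : F φ = ∑ i, lam i * Fg i φ := by
      rw [hFdef]; simp [ContinuousLinearMap.sum_apply, smul_eq_mul]
    have hGφ : G φ = ∑ i, lam i * Gg i φ := by
      rw [hGdef]; simp [ContinuousLinearMap.sum_apply, smul_eq_mul]
    have hxlow : F φ - 2 * η ≤ φ x := by
      have hsum1 : ∑ i, lam i * (Fg i φ - 2 * η) = (∑ i, lam i * Fg i φ) - 2 * η := by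
        simp [mul_sub, Finset.sum_sub_distrib, ← Finset.sum_mul, hsum]
      have hle' : ∑ i, lam i * (Fg i φ - 2 * η) ≤ ∑ i, lam i * φ (x' i) :=
        Finset.sum_le_sum fun i _ => mul_le_mul_of_nonneg_left (hφx i) (hlam i)
      rw [hφxsum, hFφ]; linarith
    have hyhigh : φ y ≤ G φ + 2 * η := by
      have hsum1 : ∑ i, lam i * (Gg i φ + 2 * η) = (∑ i, lam i * Gg i φ) + 2 * η := by
        simp [mul_add, Finset.sum_add_distrib, ← Finset.sum_mul, hsum]
      have hle' : ∑ i, lam i * φ (y' i) ≤ ∑ i, lam i * (Gg i φ + 2 * η) :=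
        Finset.sum_le_sum fun i _ => mul_le_mul_of_nonneg_left (hφy i) (hlam i)
      rw [hφysum, hGφ]; linarith
    have hxy : 2 - 2 * δ ≤ dist x y := by
      rw [dist_eq_norm]
      have hkey : φ x - φ y ≤ ‖x - y‖ := by
        calc φ x - φ y = φ (x - y) := (map_sub φ x y).symm
          _ ≤ |φ (x - y)| := le_abs_self _
          _ ≤ ‖φ‖ * ‖x - y‖ := φ.le_opNorm _
          _ ≤ 1 * ‖x - y‖ := mul_le_mul_of_nonneg_right hφn (norm_nonneg _)
          _ = ‖x - y‖ := one_mul _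
      have h2 : 2 - δ - 4 * η ≤ φ x - φ y := by linarith
      linarith
    calc 2 - 2 * δ ≤ dist x y := hxy
      _ ≤ Metric.diam S := Metric.dist_le_diam_of_mem hSbdd hxS hyS
  have h2 : (2 : ℝ) ≤ Metric.diam S := by
    by_contra hlt
    push_neg at hlt
    set δ : ℝ := min ((2 - Metric.diam S) / 4) (1 / 2) with hδ_def
    have hδ0 : 0 < δ := lt_min (by linarith) (by norm_num)
    have hδ1 : δ < 1 := lt_of_le_of_lt (min_le_right _ _) (by norm_num)
    have hge' := hge δ hδ0 hδ1
    have hδle : δ ≤ (2 - Metric.diam S) / 4 := min_le_left _ _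
    linarith
  exact le_antisymm hle h2

open NormedSpace in
/-- If every finite convex combination of weak* slices of `B_{X**}` (slices given by
norm-one functionals coming from `X*`) has diameter 2, then `X` has the strong diameter 2
property. -/
theorem stmt_19 (X : Type*) [NormedAddCommGroup X] [NormedSpace ℝ X] [CompleteSpace X]
    (h : ∀ (n : ℕ) (lam : Fin n → ℝ) (f : Fin n → StrongDual ℝ X) (ε : Fin n → ℝ),
      (∀ i, 0 ≤ lam i) → ∑ i, lam i = 1 → (∀ i, ‖f i‖ = 1) → (∀ i, 0 < ε i) →
      Metric.diam {F : StrongDual ℝ (StrongDual ℝ X) |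
        ∃ G : Fin n → StrongDual ℝ (StrongDual ℝ X),
          (∀ i, ‖G i‖ ≤ 1 ∧ 1 - ε i < G i (f i)) ∧ F = ∑ i, lam i • G i} = 2) :
    StrongD2P X := by
  intro n lam f ε h1 h2 h3 h4
  exact strongD2P_aux X h n lam f ε h1 h2 h3 h4
end
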